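/- arXiv:1608.08436 — 4 statements merged into one kernel-verified Lean document; each statement's English description precedes it below -/
import Mathlib

section
/- Let $n\in\mathbb{N}$ and $2\le p\le q\le r\le\infty$. For every real array $A=(A_{i,j,k})_{i,j,k=1}^n$, the injective tensor norm satisfies $\sup_{\|x\|_p=\|y\|_q=\|z\|_r=1}\big|\sum_{i,j,k=1}^n A_{i,j,k}x_iy_jz_k\big| \ge \tfrac12\, n^{-\frac1p-\frac1q-\frac1r-1}\sum_{i,j,k=1}^n |A_{i,j,k}|$. -/
open Finset
open scoped ENNReal NNReal

/-- The `ℓ_p` norm on `ℝ^n` for an extended real exponent `p`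
(with `pnorm ∞ x = max_i |x i|`). -/
noncomputable def pnorm (p : ℝ≥0∞) {n : ℕ} (x : Fin n → ℝ) : ℝ :=
  if p = ∞ then ⨆ i, |x i| else (∑ i, |x i| ^ p.toReal) ^ (1 / p.toReal)

/-!
Averaging over all sign vectors `ε ∈ {-1, 1}ⁿ`, flipping the signs of the negative `aᵢ` and testing
`∑ aᵢ εᵢ` against `sign (∑ εᵢ)` gives the L¹ Khintchine inequality `𝔼 |∑ aᵢ εᵢ| ≥ cₙ ∑ |aᵢ|` with
`cₙ = 𝔼 [sign (ε₁ + ⋯ + εₙ) ε₁]`. Conditioning on `ε₁` expresses `cₙ` through binomial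
coefficients near the middle, and `16ᵏ ≤ 4k·C(2k, k)²` gives `cₙ² ≥ 1 / (2n)`. Applying the
inequality in the `j`- and then the `k`-variable and taking `xᵢ` to be the sign of the remaining
sum produces sign vectors with `∑ |A| ≤ 2n ∑ A x y z`; rescaling them to the unit spheres of
`ℓ_p`, `ℓ_q`, `ℓ_r` costs the factor `n^(-1/p - 1/q - 1/r)`.
-/

open scoped symmDiff

theorem sign_le_sign {x y : ℝ} (h : x ≤ y) : (SignType.sign x : ℝ) ≤ SignType.sign y := by
  rw [sign_apply, sign_apply]
  split_ifs <;> norm_num <;> linarith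

theorem sign_mul_le_abs (x y : ℝ) : (SignType.sign x : ℝ) * y ≤ |y| := by
  rcases SignType.trichotomy (SignType.sign x) with h | h | h <;> simp [h, neg_le_abs, le_abs_self]

theorem sixteen_pow_le_mul_centralBinom_sq {k : ℕ} (hk : 1 ≤ k) :
    16 ^ k ≤ 4 * k * k.centralBinom ^ 2 := by
  induction k, hk using Nat.le_induction with
  | base => decide
  | succ k hk ih =>
    have hrec := Nat.succ_mul_centralBinom_succ k
    refine Nat.le_of_mul_le_mul_left ?_ (Nat.succ_pos k)
    calc (k + 1) * 16 ^ (k + 1) ≤ (k + 1) * 16 * (4 * k * k.centralBinom ^ 2) := by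
          rw [pow_succ]; nlinarith
      _ ≤ 4 * (2 * (2 * k + 1) * k.centralBinom) ^ 2 := by
          nlinarith [Nat.zero_le (k.centralBinom ^ 2)]
      _ = (k + 1) * (4 * (k + 1) * (k + 1).centralBinom ^ 2) := by rw [← hrec]; ring

-- For `Fintype.card ι = m + 1` this is `∑_T sign (∑ⱼ signVec T j) · signVec T i`
-- (`sum_sign_mul_signVec`); the `k`-th term collects the `T` with `k` elements other than `i`.
noncomputable def signCorrelation (m : ℕ) : ℝ :=
  ∑ k ∈ range (m + 1),
    (m.choose k : ℝ) * (SignType.sign ((m : ℝ) + 1 - 2 * k) - SignType.sign ((m : ℝ) - 1 - 2 * k))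

theorem signCorrelation_term_nonneg (m k : ℕ) :
    0 ≤ (m.choose k : ℝ) *
      (SignType.sign ((m : ℝ) + 1 - 2 * k) - SignType.sign ((m : ℝ) - 1 - 2 * k)) :=
  mul_nonneg (Nat.cast_nonneg _) (sub_nonneg.mpr (sign_le_sign (by linarith)))

theorem signCorrelation_nonneg (m : ℕ) : 0 ≤ signCorrelation m :=
  sum_nonneg fun k _ => signCorrelation_term_nonneg m k

theorem two_mul_centralBinom_le_signCorrelation (k : ℕ) :
    2 * (k.centralBinom : ℝ) ≤ signCorrelation (2 * k) := by
  refine le_trans (le_of_eq ?_) (single_le_sum (fun j _ => signCorrelation_term_nonneg (2 * k) j)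
    (mem_range.mpr (by omega : k < 2 * k + 1)))
  have h1 : ((2 * k : ℕ) : ℝ) + 1 - 2 * k = 1 := by push_cast; ring
  have h2 : ((2 * k : ℕ) : ℝ) - 1 - 2 * k = -1 := by push_cast; ring
  rw [h1, h2, sign_pos one_pos, sign_neg (by norm_num), Nat.centralBinom_eq_two_mul_choose]
  simp only [SignType.coe_one, SignType.coe_neg_one]
  ring

theorem centralBinom_succ_le_signCorrelation (k : ℕ) :
    ((k + 1).centralBinom : ℝ) ≤ signCorrelation (2 * k + 1) := by
  have hsub : {k, k + 1} ⊆ range (2 * k + 1 + 1) := by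
    intro j hj; simp only [mem_insert, mem_singleton] at hj; rw [mem_range]; omega
  refine le_trans (le_of_eq ?_) (sum_le_sum_of_subset_of_nonneg hsub
    (fun j _ _ => signCorrelation_term_nonneg (2 * k + 1) j))
  rw [sum_pair (by omega), Nat.centralBinom_eq_two_mul_choose,
    show 2 * (k + 1) = 2 * k + 1 + 1 by ring, Nat.choose_succ_succ']
  have h1 : ((2 * k + 1 : ℕ) : ℝ) + 1 - 2 * k = 2 := by push_cast; ring
  have h2 : ((2 * k + 1 : ℕ) : ℝ) - 1 - 2 * k = 0 := by push_cast; ring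
  have h3 : ((2 * k + 1 : ℕ) : ℝ) + 1 - 2 * (k + 1 : ℕ) = 0 := by push_cast; ring
  have h4 : ((2 * k + 1 : ℕ) : ℝ) - 1 - 2 * (k + 1 : ℕ) = -2 := by push_cast; ring
  rw [h1, h2, h3, h4, sign_pos two_pos, sign_zero, sign_neg (by norm_num)]
  simp only [SignType.coe_one, SignType.coe_neg_one, SignType.coe_zero]
  push_cast
  ring

theorem four_pow_le_mul_signCorrelation_sq (m : ℕ) :
    (4 : ℝ) ^ (m + 1) ≤ 2 * (m + 1) * signCorrelation m ^ 2 := by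
  obtain ⟨k, rfl | rfl⟩ := Nat.even_or_odd' m
  · have hc : (16 : ℝ) ^ k ≤ 2 * (2 * k + 1) * k.centralBinom ^ 2 := by
      rcases Nat.eq_zero_or_pos k with rfl | hk
      · norm_num
      calc (16 : ℝ) ^ k ≤ 4 * k * k.centralBinom ^ 2 := by
            exact_mod_cast sixteen_pow_le_mul_centralBinom_sq hk
        _ ≤ 2 * (2 * k + 1) * k.centralBinom ^ 2 := by gcongr ?_ * _; linarith
    calc (4 : ℝ) ^ (2 * k + 1) = 4 * 16 ^ k := by rw [pow_succ, pow_mul]; norm_num; ring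
      _ ≤ 2 * ((2 * k : ℕ) + 1) * (2 * k.centralBinom) ^ 2 := by push_cast; linarith
      _ ≤ 2 * ((2 * k : ℕ) + 1) * signCorrelation (2 * k) ^ 2 := by
          gcongr; exact two_mul_centralBinom_le_signCorrelation k
  · have hc : (16 : ℝ) ^ (k + 1) ≤ 4 * (k + 1 : ℕ) * (k + 1).centralBinom ^ 2 := by
      exact_mod_cast sixteen_pow_le_mul_centralBinom_sq (by omega)
    calc (4 : ℝ) ^ (2 * k + 1 + 1) = 16 ^ (k + 1) := by
          rw [show 2 * k + 1 + 1 = 2 * (k + 1) by ring, pow_mul]; norm_num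
      _ ≤ 2 * ((2 * k + 1 : ℕ) + 1) * ((k + 1).centralBinom : ℝ) ^ 2 := by
          convert hc using 2; push_cast; ring
      _ ≤ 2 * ((2 * k + 1 : ℕ) + 1) * signCorrelation (2 * k + 1) ^ 2 := by
          gcongr; exact centralBinom_succ_le_signCorrelation k

section SignVectors

variable {ι κ ν : Type*} [Fintype ι] [DecidableEq ι] [Fintype κ] [DecidableEq κ]
  [Fintype ν] [DecidableEq ν]

-- The sign vector in `{-1, 1}^ι` whose `-1` entries are the elements of `T`.
def signVec (T : Finset ι) (i : ι) : ℝ := if i ∈ T then -1 else 1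

omit [Fintype ι] in
theorem abs_signVec (T : Finset ι) (i : ι) : |signVec T i| = 1 := by
  unfold signVec; split_ifs <;> norm_num

omit [Fintype ι] in
theorem signVec_symmDiff (T θ : Finset ι) (i : ι) :
    signVec (T ∆ θ) i = signVec θ i * signVec T i := by
  simp only [signVec, Finset.mem_symmDiff]; split_ifs <;> simp_all

theorem mul_signVec_filter_neg (a : ι → ℝ) (i : ι) : a i * signVec {j | a j < 0} i = |a i| := by
  by_cases h : a i < 0 <;> simp [signVec, h, abs_of_neg, abs_of_nonneg, not_lt.mp]

theorem sum_signVec (T : Finset ι) : ∑ i, signVec T i = Fintype.card ι - 2 * #T := by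
  have h : ∀ i, signVec T i = 1 - 2 * if i ∈ T then 1 else 0 := by
    intro i; unfold signVec; split_ifs <;> norm_num
  simp [h, sum_sub_distrib, mul_comm]

theorem sum_sign_mul_signVec {m : ℕ} (hm : Fintype.card ι = m + 1) (i : ι) :
    ∑ T : Finset ι, (SignType.sign (∑ j, signVec T j) : ℝ) * signVec T i = signCorrelation m := by
  set s := univ.erase i
  have huniv : (univ : Finset (Finset ι)) = (insert i s).powerset := by
    rw [insert_erase (mem_univ i), powerset_univ]
  have hcard : #s = m := by
    rw [card_erase_of_mem (mem_univ i), card_univ, hm, Nat.add_sub_cancel]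
  let g (k : ℕ) : ℝ := SignType.sign ((m : ℝ) + 1 - 2 * k) - SignType.sign ((m : ℝ) - 1 - 2 * k)
  calc ∑ T : Finset ι, (SignType.sign (∑ j, signVec T j) : ℝ) * signVec T i
      = ∑ t ∈ s.powerset, g #t := by
        rw [huniv, sum_powerset_insert (notMem_erase i univ), ← sum_add_distrib]
        refine sum_congr rfl fun t ht => ?_
        have hit : i ∉ t := fun h => notMem_erase i univ (mem_powerset.mp ht h)
        rw [sum_signVec, sum_signVec, card_insert_of_notMem hit, hm]
        simp only [g, signVec, hit, if_false, mem_insert_self, if_true]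
        push_cast
        ring_nf
    _ = signCorrelation m := by
        rw [sum_powerset_apply_card, hcard, signCorrelation]
        simp only [nsmul_eq_mul, g]

theorem signCorrelation_mul_sum_abs_le {m : ℕ} (hm : Fintype.card ι = m + 1) (a : ι → ℝ) :
    signCorrelation m * ∑ i, |a i| ≤ ∑ T : Finset ι, |∑ i, a i * signVec T i| := by
  set θ : Finset ι := {i | a i < 0}
  have hflip (T : Finset ι) : ∑ i, a i * signVec (T ∆ θ) i = ∑ i, |a i| * signVec T i := by
    refine sum_congr rfl fun i _ => ?_
    rw [signVec_symmDiff, ← mul_assoc, mul_signVec_filter_neg]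
  calc signCorrelation m * ∑ i, |a i|
      = ∑ i, |a i| * ∑ T : Finset ι, (SignType.sign (∑ j, signVec T j) : ℝ) * signVec T i := by
        simp_rw [sum_sign_mul_signVec hm]; rw [← sum_mul, mul_comm]
    _ = ∑ T : Finset ι, (SignType.sign (∑ j, signVec T j) : ℝ) * ∑ i, |a i| * signVec T i := by
        simp only [mul_sum]; rw [sum_comm]; simp only [mul_left_comm]
    _ ≤ ∑ T : Finset ι, |∑ i, |a i| * signVec T i| := sum_le_sum fun T _ => sign_mul_le_abs _ _
    _ = ∑ T : Finset ι, |∑ i, a i * signVec T i| :=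
        Fintype.sum_bijective (· ∆ θ) (symmDiff_left_involutive θ).bijective _ _
          fun T => by rw [hflip]

theorem signCorrelation_mul_mul_sum_abs_le {m₁ m₂ : ℕ} (hκ : Fintype.card κ = m₁ + 1)
    (hν : Fintype.card ν = m₂ + 1) (B : κ → ν → ℝ) :
    signCorrelation m₁ * signCorrelation m₂ * ∑ j, ∑ k, |B j k| ≤
      ∑ U : Finset κ, ∑ V : Finset ν, |∑ j, ∑ k, B j k * signVec U j * signVec V k| := by
  calc signCorrelation m₁ * signCorrelation m₂ * ∑ j, ∑ k, |B j k|
      = signCorrelation m₂ * ∑ k, signCorrelation m₁ * ∑ j, |B j k| := by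
        rw [sum_comm, mul_sum, mul_sum]; ring_nf
    _ ≤ signCorrelation m₂ * ∑ k, ∑ U : Finset κ, |∑ j, B j k * signVec U j| := by
        gcongr with k
        · exact signCorrelation_nonneg m₂
        · exact signCorrelation_mul_sum_abs_le hκ _
    _ = ∑ U : Finset κ, signCorrelation m₂ * ∑ k, |∑ j, B j k * signVec U j| := by
        rw [sum_comm, mul_sum]
    _ ≤ ∑ U : Finset κ, ∑ V : Finset ν, |∑ k, (∑ j, B j k * signVec U j) * signVec V k| :=
        sum_le_sum fun U _ => signCorrelation_mul_sum_abs_le hν _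
    _ = ∑ U : Finset κ, ∑ V : Finset ν, |∑ j, ∑ k, B j k * signVec U j * signVec V k| := by
        refine sum_congr rfl fun U _ => sum_congr rfl fun V _ => ?_
        rw [sum_comm]; simp only [sum_mul]

theorem exists_abs_eq_one_signCorrelation_mul_le {m₁ m₂ : ℕ} (hκ : Fintype.card κ = m₁ + 1)
    (hν : Fintype.card ν = m₂ + 1) (A : ι → κ → ν → ℝ) :
    ∃ (x : ι → ℝ) (y : κ → ℝ) (z : ν → ℝ), (∀ i, |x i| = 1) ∧ (∀ j, |y j| = 1) ∧
      (∀ k, |z k| = 1) ∧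
      signCorrelation m₁ * signCorrelation m₂ * ∑ i, ∑ j, ∑ k, |A i j k| ≤
        2 ^ (m₁ + 1) * 2 ^ (m₂ + 1) * ∑ i, ∑ j, ∑ k, A i j k * x i * y j * z k := by
  let w (UV : Finset κ × Finset ν) (i : ι) : ℝ :=
    ∑ j, ∑ k, A i j k * signVec UV.1 j * signVec UV.2 k
  have hcard : (Fintype.card (Finset κ × Finset ν) : ℝ) = 2 ^ (m₁ + 1) * 2 ^ (m₂ + 1) := by
    simp [Fintype.card_prod, Fintype.card_finset, hκ, hν]
  have hsum : ∑ _UV : Finset κ × Finset ν,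
        signCorrelation m₁ * signCorrelation m₂ * ∑ i, ∑ j, ∑ k, |A i j k| ≤
      ∑ UV : Finset κ × Finset ν, 2 ^ (m₁ + 1) * 2 ^ (m₂ + 1) * ∑ i, |w UV i| := by
    rw [sum_const, card_univ, nsmul_eq_mul, hcard, ← mul_sum]
    refine mul_le_mul_of_nonneg_left ?_ (by positivity)
    calc signCorrelation m₁ * signCorrelation m₂ * ∑ i, ∑ j, ∑ k, |A i j k|
        ≤ ∑ i, ∑ U : Finset κ, ∑ V : Finset ν, |w (U, V) i| := by
          rw [mul_sum]
          exact sum_le_sum fun i _ => signCorrelation_mul_mul_sum_abs_le hκ hν (A i)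
      _ = ∑ UV : Finset κ × Finset ν, ∑ i, |w UV i| := by
          rw [sum_comm, Fintype.sum_prod_type]; simp only [sum_comm (γ := ι)]
  obtain ⟨⟨U, V⟩, -, hUV⟩ := exists_le_of_sum_le univ_nonempty hsum
  refine ⟨signVec {i | w (U, V) i < 0}, signVec U, signVec V, abs_signVec _, abs_signVec _,
    abs_signVec _, hUV.trans_eq ?_⟩
  congr 1
  refine sum_congr rfl fun i _ => ?_
  rw [← mul_signVec_filter_neg]
  simp only [w, sum_mul]
  refine sum_congr rfl fun j _ => sum_congr rfl fun k _ => by ring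

end SignVectors

theorem exists_abs_eq_one_sum_abs_le_two_mul_sum_mul {n : ℕ} (A : Fin n → Fin n → Fin n → ℝ) :
    ∃ x y z : Fin n → ℝ, (∀ i, |x i| = 1) ∧ (∀ j, |y j| = 1) ∧ (∀ k, |z k| = 1) ∧
      ∑ i, ∑ j, ∑ k, |A i j k| ≤ 2 * n * ∑ i, ∑ j, ∑ k, A i j k * x i * y j * z k := by
  cases n with
  | zero => exact ⟨1, 1, 1, by simp⟩
  | succ m =>
    obtain ⟨x, y, z, hx, hy, hz, hA⟩ :=
      exists_abs_eq_one_signCorrelation_mul_le (Fintype.card_fin _) (Fintype.card_fin _) A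
    refine ⟨x, y, z, hx, hy, hz, le_of_mul_le_mul_left ?_ (by positivity : (0 : ℝ) < 4 ^ (m + 1))⟩
    calc 4 ^ (m + 1) * ∑ i, ∑ j, ∑ k, |A i j k|
        ≤ 2 * (m + 1) * signCorrelation m ^ 2 * ∑ i, ∑ j, ∑ k, |A i j k| :=
          mul_le_mul_of_nonneg_right (four_pow_le_mul_signCorrelation_sq m) (by positivity)
      _ = 2 * (m + 1) * (signCorrelation m * signCorrelation m * ∑ i, ∑ j, ∑ k, |A i j k|) := by
          ring
      _ ≤ 2 * (m + 1) * (2 ^ (m + 1) * 2 ^ (m + 1) * ∑ i, ∑ j, ∑ k, A i j k * x i * y j * z k) :=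
          mul_le_mul_of_nonneg_left hA (by positivity)
      _ = 4 ^ (m + 1) * (2 * ↑(m + 1) * ∑ i, ∑ j, ∑ k, A i j k * x i * y j * z k) := by
          rw [← mul_pow]; push_cast; ring

theorem abs_sum_mul_le_sum_abs {ι κ ν : Type*} [Fintype ι] [Fintype κ] [Fintype ν]
    (A : ι → κ → ν → ℝ) {x : ι → ℝ} {y : κ → ℝ} {z : ν → ℝ} (hx : ∀ i, |x i| ≤ 1)
    (hy : ∀ j, |y j| ≤ 1) (hz : ∀ k, |z k| ≤ 1) :
    |∑ i, ∑ j, ∑ k, A i j k * x i * y j * z k| ≤ ∑ i, ∑ j, ∑ k, |A i j k| := by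
  refine (abs_sum_le_sum_abs _ _).trans (sum_le_sum fun i _ => ?_)
  refine (abs_sum_le_sum_abs _ _).trans (sum_le_sum fun j _ => ?_)
  refine (abs_sum_le_sum_abs _ _).trans (sum_le_sum fun k _ => ?_)
  rw [abs_mul, abs_mul, abs_mul]
  have := hx i; have := hy j; have := hz k
  calc |A i j k| * |x i| * |y j| * |z k| ≤ |A i j k| * 1 * 1 * 1 := by gcongr
    _ = |A i j k| := by ring

theorem abs_le_pnorm {p : ℝ≥0∞} (hp : p ≠ 0) {n : ℕ} (x : Fin n → ℝ) (i : Fin n) :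
    |x i| ≤ pnorm p x := by
  unfold pnorm
  split_ifs with hpi
  · exact le_ciSup (f := fun j => |x j|) (Set.finite_range _).bddAbove i
  · have hp' : 0 < p.toReal := ENNReal.toReal_pos hp hpi
    calc |x i| = (|x i| ^ p.toReal) ^ (1 / p.toReal) := by
          rw [← Real.rpow_mul (abs_nonneg _), mul_one_div_cancel hp'.ne', Real.rpow_one]
      _ ≤ (∑ j, |x j| ^ p.toReal) ^ (1 / p.toReal) := by
          gcongr
          exact single_le_sum (f := fun j => |x j| ^ p.toReal) (fun j _ => by positivity)
            (mem_univ i)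

theorem pnorm_of_abs_eq {p : ℝ≥0∞} (hp : p ≠ 0) {n : ℕ} (hn : 0 < n) {x : Fin n → ℝ} {c : ℝ}
    (hc : 0 ≤ c) (hx : ∀ i, |x i| = c) : pnorm p x = (n : ℝ) ^ (1 / p).toReal * c := by
  unfold pnorm
  split_ifs with hpi
  · have : Nonempty (Fin n) := ⟨⟨0, hn⟩⟩
    simp [hpi, hx]
  · have hp' : 0 < p.toReal := ENNReal.toReal_pos hp hpi
    simp only [hx, sum_const, card_univ, Fintype.card_fin, nsmul_eq_mul]
    rw [Real.mul_rpow (by positivity) (by positivity), ← Real.rpow_mul hc,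
      mul_one_div_cancel hp'.ne', Real.rpow_one]
    simp only [one_div, ENNReal.toReal_inv]

theorem pnorm_rpow_neg_mul_eq_one {p : ℝ≥0∞} (hp : p ≠ 0) {n : ℕ} (hn : 0 < n)
    {x : Fin n → ℝ} (hx : ∀ i, |x i| = 1) :
    pnorm p (fun i => (n : ℝ) ^ (-(1 / p).toReal) * x i) = 1 := by
  have hn' : (0 : ℝ) < n := Nat.cast_pos.mpr hn
  rw [pnorm_of_abs_eq hp hn (Real.rpow_nonneg hn'.le _)
    fun i => by rw [abs_mul, hx, mul_one, abs_of_pos (Real.rpow_pos_of_pos hn' _)],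
    ← Real.rpow_add hn', add_neg_cancel, Real.rpow_zero]

theorem exists_pnorm_eq_one_le_abs_sum_mul {p q r : ℝ≥0∞} (hp : p ≠ 0) (hq : q ≠ 0)
    (hr : r ≠ 0) {n : ℕ} (hn : 0 < n) (A : Fin n → Fin n → Fin n → ℝ) :
    ∃ x y z : Fin n → ℝ, pnorm p x = 1 ∧ pnorm q y = 1 ∧ pnorm r z = 1 ∧
      1 / 2 * (n : ℝ) ^ (-(1 / p).toReal - (1 / q).toReal - (1 / r).toReal - 1) *
        ∑ i, ∑ j, ∑ k, |A i j k| ≤ |∑ i, ∑ j, ∑ k, A i j k * x i * y j * z k| := by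
  obtain ⟨x, y, z, hx, hy, hz, hA⟩ := exists_abs_eq_one_sum_abs_le_two_mul_sum_mul A
  have hn' : (0 : ℝ) < n := Nat.cast_pos.mpr hn
  set a := (1 / p).toReal
  set b := (1 / q).toReal
  set c := (1 / r).toReal
  set S := ∑ i, ∑ j, ∑ k, A i j k * x i * y j * z k
  have hS : 0 ≤ S := by
    have : 0 ≤ ∑ i, ∑ j, ∑ k, |A i j k| := by positivity
    nlinarith
  have hscale : ∑ i, ∑ j, ∑ k, A i j k * ((n : ℝ) ^ (-a) * x i) * ((n : ℝ) ^ (-b) * y j) *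
      ((n : ℝ) ^ (-c) * z k) = (n : ℝ) ^ (-a - b - c) * S := by
    rw [sub_eq_add_neg, sub_eq_add_neg, Real.rpow_add hn', Real.rpow_add hn']
    simp only [S, mul_sum]
    exact sum_congr rfl fun i _ => sum_congr rfl fun j _ => sum_congr rfl fun k _ => by ring
  refine ⟨_, _, _, pnorm_rpow_neg_mul_eq_one hp hn hx, pnorm_rpow_neg_mul_eq_one hq hn hy,
    pnorm_rpow_neg_mul_eq_one hr hn hz, ?_⟩
  rw [hscale, abs_of_nonneg (by positivity)]
  calc 1 / 2 * (n : ℝ) ^ (-a - b - c - 1) * ∑ i, ∑ j, ∑ k, |A i j k|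
      = (n : ℝ) ^ (-a - b - c) * ((∑ i, ∑ j, ∑ k, |A i j k|) / (2 * n)) := by
        rw [Real.rpow_sub_one hn'.ne']; field_simp
    _ ≤ (n : ℝ) ^ (-a - b - c) * S := by
        gcongr; rwa [div_le_iff₀ (by positivity), mul_comm]

theorem bddAbove_abs_sum_mul_of_pnorm_eq_one {p q r : ℝ≥0∞} (hp : p ≠ 0) (hq : q ≠ 0)
    (hr : r ≠ 0) {n : ℕ} (A : Fin n → Fin n → Fin n → ℝ) :
    BddAbove {t : ℝ | ∃ x y z : Fin n → ℝ, pnorm p x = 1 ∧ pnorm q y = 1 ∧ pnorm r z = 1 ∧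
      t = |∑ i, ∑ j, ∑ k, A i j k * x i * y j * z k|} := by
  refine ⟨∑ i, ∑ j, ∑ k, |A i j k|, ?_⟩
  rintro t ⟨x, y, z, hx, hy, hz, rfl⟩
  exact abs_sum_mul_le_sum_abs A (fun i => hx ▸ abs_le_pnorm hp x i)
    (fun j => hy ▸ abs_le_pnorm hq y j) (fun k => hz ▸ abs_le_pnorm hr z k)

theorem stmt0 (n : ℕ) (p q r : ℝ≥0∞) (hp : 2 ≤ p) (hpq : p ≤ q) (hqr : q ≤ r)
    (A : Fin n → Fin n → Fin n → ℝ) :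
    sSup {t : ℝ | ∃ x y z : Fin n → ℝ, pnorm p x = 1 ∧ pnorm q y = 1 ∧ pnorm r z = 1 ∧
        t = |∑ i, ∑ j, ∑ k, A i j k * x i * y j * z k|} ≥
      (1 / 2) * (n : ℝ) ^ (-(1 / p).toReal - (1 / q).toReal - (1 / r).toReal - 1) *
        ∑ i, ∑ j, ∑ k, |A i j k| := by
  have hp0 : p ≠ 0 := (two_pos.trans_le hp).ne'
  have hq0 : q ≠ 0 := (two_pos.trans_le (hp.trans hpq)).ne'
  have hr0 : r ≠ 0 := (two_pos.trans_le (hp.trans (hpq.trans hqr))).ne'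
  rcases Nat.eq_zero_or_pos n with rfl | hn
  · simp only [univ_eq_empty, sum_empty, mul_zero]
    exact Real.sSup_nonneg fun t ⟨_, _, _, _, _, _, ht⟩ => ht ▸ abs_nonneg _
  obtain ⟨x, y, z, hx, hy, hz, hle⟩ := exists_pnorm_eq_one_le_abs_sum_mul hp0 hq0 hr0 hn A
  exact hle.trans
    (le_csSup (bddAbove_abs_sum_mul_of_pnorm_eq_one hp0 hq0 hr0 A) ⟨x, y, z, hx, hy, hz, rfl⟩)
end

section
/- Let $n\in\mathbb{N}$ and $1\le p\le q\le 2\le r\le\infty$. For every real array $A=(A_{i,j,k})_{i,j,k=1}^n$, $\sup_{\|x\|_p=\|y\|_q=\|z\|_r=1}\big|\sum_{i,j,k=1}^n A_{i,j,k}x_iy_jz_k\big| \ge n^{-\frac1r-2}\sum_{i,j,k=1}^n |A_{i,j,k}|$. -/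
open Finset
open scoped ENNReal NNReal

lemma pnorm_coord_le {p : ℝ≥0∞} (hp : 1 ≤ p) {n : ℕ} {x : Fin n → ℝ}
    (h : pnorm p x = 1) (i : Fin n) : |x i| ≤ 1 := by
  unfold pnorm at h
  split_ifs at h with hpi
  · rw [← h]
    exact le_ciSup (f := fun j => |x j|) (Set.Finite.bddAbove (Set.finite_range _)) i
  · have ht : 0 < p.toReal := ENNReal.toReal_pos (one_pos.trans_le hp).ne' hpi
    have hnn : (0:ℝ) ≤ ∑ j, |x j| ^ p.toReal :=
      Finset.sum_nonneg fun j _ => Real.rpow_nonneg (abs_nonneg _) _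
    have hS : (∑ j, |x j| ^ p.toReal) = 1 := by
      have h2 := congrArg (fun y : ℝ => y ^ p.toReal) h
      simp only [one_div] at h2
      rwa [Real.rpow_inv_rpow hnn ht.ne', Real.one_rpow] at h2
    have hle : |x i| ^ p.toReal ≤ 1 := by
      rw [← hS]
      exact Finset.single_le_sum (fun j _ => Real.rpow_nonneg (abs_nonneg _) _)
        (Finset.mem_univ i)
    calc |x i| = (|x i| ^ p.toReal) ^ p.toReal⁻¹ :=
          (Real.rpow_rpow_inv (abs_nonneg _) ht.ne').symm
      _ ≤ 1 ^ p.toReal⁻¹ :=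
          Real.rpow_le_rpow (Real.rpow_nonneg (abs_nonneg _) _) hle (by positivity)
      _ = 1 := Real.one_rpow _

lemma pnorm_single {p : ℝ≥0∞} (hp : 1 ≤ p) {n : ℕ} (i0 : Fin n) :
    pnorm p (fun i => if i = i0 then (1:ℝ) else 0) = 1 := by
  have hne : Nonempty (Fin n) := ⟨i0⟩
  unfold pnorm
  split_ifs with hpi
  · apply le_antisymm
    · exact ciSup_le fun i => by dsimp only; split_ifs <;> simp
    · have h := le_ciSup (f := fun i => |if i = i0 then (1:ℝ) else 0|)
        (Set.Finite.bddAbove (Set.finite_range _)) i0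
      simpa using h
  · have ht : 0 < p.toReal := ENNReal.toReal_pos (one_pos.trans_le hp).ne' hpi
    have hsum : (∑ i, |if i = i0 then (1:ℝ) else 0| ^ p.toReal) = 1 := by
      rw [Finset.sum_congr rfl (g := fun i => if i = i0 then (1:ℝ) else 0)
        (fun i _ => by split_ifs with h <;> simp [h, Real.zero_rpow ht.ne'])]
      simp
    rw [hsum, Real.one_rpow]

theorem stmt2 (n : ℕ) (p q r : ℝ≥0∞) (hp : 1 ≤ p) (hpq : p ≤ q) (hq2 : q ≤ 2) (h2r : 2 ≤ r)
    (A : Fin n → Fin n → Fin n → ℝ) :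
    sSup {t : ℝ | ∃ x y z : Fin n → ℝ, pnorm p x = 1 ∧ pnorm q y = 1 ∧ pnorm r z = 1 ∧
        t = |∑ i, ∑ j, ∑ k, A i j k * x i * y j * z k|} ≥
      (n : ℝ) ^ (-(1 / r).toReal - 2) * ∑ i, ∑ j, ∑ k, |A i j k| := by
  rcases Nat.eq_zero_or_pos n with hn | hn
  · subst hn
    have hempty : {t : ℝ | ∃ x y z : Fin 0 → ℝ, pnorm p x = 1 ∧ pnorm q y = 1 ∧
        pnorm r z = 1 ∧ t = |∑ i, ∑ j, ∑ k, A i j k * x i * y j * z k|} = ∅ := by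
      ext t
      simp only [Set.mem_setOf_eq, Set.mem_empty_iff_false, iff_false]
      rintro ⟨x, y, z, hx, -, -, -⟩
      unfold pnorm at hx
      split_ifs at hx with hpi
      · rw [Real.iSup_of_isEmpty] at hx
        exact zero_ne_one hx
      · have ht : 0 < p.toReal := ENNReal.toReal_pos (one_pos.trans_le hp).ne' hpi
        rw [Finset.univ_eq_empty, Finset.sum_empty,
          Real.zero_rpow (by positivity : (1:ℝ)/p.toReal ≠ 0)] at hx
        exact zero_ne_one hx
    rw [hempty, Real.sSup_empty]
    simp
  · have hN : (0:ℝ) < n := by exact_mod_cast hn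
    have hq1 : 1 ≤ q := hp.trans hpq
    have hr1 : 1 ≤ r := le_trans (by norm_num) h2r
    set e : ℝ := (1 / r).toReal with he
    set c : ℝ := (n : ℝ) ^ (-e) with hc
    have hcpos : 0 < c := Real.rpow_pos_of_pos hN _
    obtain ⟨⟨i0, j0⟩, -, hmax⟩ := Finset.exists_max_image (Finset.univ ×ˢ Finset.univ)
      (fun pr : Fin n × Fin n => ∑ k, |A pr.1 pr.2 k|)
      ⟨(⟨0, hn⟩, ⟨0, hn⟩), by simp⟩
    have hne : Nonempty (Fin n) := ⟨⟨0, hn⟩⟩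
    set x : Fin n → ℝ := fun i => if i = i0 then 1 else 0 with hxdef
    set y : Fin n → ℝ := fun j => if j = j0 then 1 else 0 with hydef
    set s : Fin n → ℝ := fun k => if 0 ≤ A i0 j0 k then 1 else -1 with hsdef
    set z : Fin n → ℝ := fun k => s k * c with hzdef
    have hxn : pnorm p x = 1 := pnorm_single hp i0
    have hyn : pnorm q y = 1 := pnorm_single hq1 j0
    have hzabs : ∀ k, |z k| = c := by
      intro k
      have hs1 : |s k| = 1 := by
        rw [hsdef]; dsimp only; split_ifs <;> simp
      rw [hzdef]; dsimp only
      rw [abs_mul, hs1, one_mul, abs_of_pos hcpos]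
    have hzn : pnorm r z = 1 := by
      unfold pnorm
      split_ifs with hri
      · have hc1 : c = 1 := by
          rw [hc, he, hri]
          simp
        simp only [hzabs, hc1]
        exact ciSup_const
      · have ht : 0 < r.toReal := ENNReal.toReal_pos (one_pos.trans_le hr1).ne' hri
        have heq : e = (r.toReal)⁻¹ := by
          rw [he, ENNReal.toReal_div]
          simp [one_div]
        have hct : c ^ r.toReal = ((n:ℝ)) ^ (-1 : ℝ) := by
          rw [hc, ← Real.rpow_mul hN.le, heq]
          congr 1
          field_simp
        have hsum : (∑ k, |z k| ^ r.toReal) = 1 := by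
          simp only [hzabs]
          rw [Finset.sum_const, Finset.card_univ, Fintype.card_fin, nsmul_eq_mul, hct,
            Real.rpow_neg_one]
          field_simp
        rw [hsum, Real.one_rpow]
    have hB0 : (0:ℝ) ≤ ∑ k, |A i0 j0 k| := Finset.sum_nonneg fun k _ => abs_nonneg _
    have hval : (∑ i, ∑ j, ∑ k, A i j k * x i * y j * z k) = c * ∑ k, |A i0 j0 k| := by
      have step1 : (∑ i, ∑ j, ∑ k, A i j k * x i * y j * z k)
          = ∑ i, ∑ j, (x i * y j) * ∑ k, A i j k * z k := by
        refine Finset.sum_congr rfl fun i _ => Finset.sum_congr rfl fun j _ => ?_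
        rw [Finset.mul_sum]
        exact Finset.sum_congr rfl fun k _ => by ring
      rw [step1]
      have step2 : (∑ i, ∑ j, (x i * y j) * ∑ k, A i j k * z k)
          = ∑ k, A i0 j0 k * z k := by
        rw [hxdef, hydef]
        simp [ite_mul, one_mul, zero_mul, Finset.sum_ite_eq']
      rw [step2]
      have step3 : ∀ k, A i0 j0 k * z k = c * |A i0 j0 k| := by
        intro k
        rw [hzdef, hsdef]
        dsimp only
        split_ifs with h
        · rw [abs_of_nonneg h]; ring
        · rw [abs_of_neg (lt_of_not_ge h)]; ring
      rw [Finset.sum_congr rfl fun k _ => step3 k, ← Finset.mul_sum]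
    have hmem : c * ∑ k, |A i0 j0 k| ∈ {t : ℝ | ∃ x y z : Fin n → ℝ, pnorm p x = 1 ∧
        pnorm q y = 1 ∧ pnorm r z = 1 ∧
        t = |∑ i, ∑ j, ∑ k, A i j k * x i * y j * z k|} := by
      refine ⟨x, y, z, hxn, hyn, hzn, ?_⟩
      rw [hval, abs_of_nonneg (by positivity)]
    have hbdd : BddAbove {t : ℝ | ∃ x y z : Fin n → ℝ, pnorm p x = 1 ∧
        pnorm q y = 1 ∧ pnorm r z = 1 ∧
        t = |∑ i, ∑ j, ∑ k, A i j k * x i * y j * z k|} := by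
      refine ⟨∑ i, ∑ j, ∑ k, |A i j k|, ?_⟩
      rintro t ⟨x', y', z', hx', hy', hz', rfl⟩
      calc |∑ i, ∑ j, ∑ k, A i j k * x' i * y' j * z' k|
          ≤ ∑ i, ∑ j, ∑ k, |A i j k * x' i * y' j * z' k| := by
            refine (Finset.abs_sum_le_sum_abs _ _).trans (Finset.sum_le_sum fun i _ => ?_)
            refine (Finset.abs_sum_le_sum_abs _ _).trans (Finset.sum_le_sum fun j _ => ?_)
            exact Finset.abs_sum_le_sum_abs _ _
        _ ≤ ∑ i, ∑ j, ∑ k, |A i j k| := by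
            refine Finset.sum_le_sum fun i _ => Finset.sum_le_sum fun j _ =>
              Finset.sum_le_sum fun k _ => ?_
            rw [abs_mul, abs_mul, abs_mul]
            calc |A i j k| * |x' i| * |y' j| * |z' k|
                ≤ |A i j k| * 1 * 1 * 1 := by
                  gcongr <;> first
                    | exact abs_nonneg _
                    | exact pnorm_coord_le hp hx' i
                    | exact pnorm_coord_le hq1 hy' j
                    | exact pnorm_coord_le hr1 hz' k
              _ = |A i j k| := by ring
    refine le_trans ?_ (le_csSup hbdd hmem)
    have htot : (∑ i, ∑ j, ∑ k, |A i j k|) ≤ (n:ℝ)^2 * ∑ k, |A i0 j0 k| := by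
      calc (∑ i, ∑ j, ∑ k, |A i j k|)
          = ∑ pr ∈ Finset.univ ×ˢ Finset.univ, ∑ k, |A pr.1 pr.2 k| := by
            rw [Finset.sum_product]
        _ ≤ ∑ _pr ∈ Finset.univ ×ˢ Finset.univ, ∑ k, |A i0 j0 k| :=
            Finset.sum_le_sum fun pr h => hmax pr h
        _ = (n:ℝ)^2 * ∑ k, |A i0 j0 k| := by
            rw [Finset.sum_const, Finset.card_product, Finset.card_univ, Fintype.card_fin,
              nsmul_eq_mul]
            push_cast
            ring
    have hpow : (n : ℝ) ^ (-e - 2) = c * ((n:ℝ)^2)⁻¹ := by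
      rw [show (-e - 2 : ℝ) = -e + (-2) by ring, Real.rpow_add hN, hc]
      congr 1
      rw [show ((2:ℝ)) = ((2:ℕ):ℝ) by norm_num] at *
      rw [Real.rpow_neg hN.le, Real.rpow_natCast]
    rw [hpow]
    have hsq : (0:ℝ) < (n:ℝ)^2 := by positivity
    have h2 : ((n:ℝ)^2)⁻¹ * (∑ i, ∑ j, ∑ k, |A i j k|) ≤ ∑ k, |A i0 j0 k| := by
      rw [inv_mul_le_iff₀ hsq]
      exact htot
    calc c * ((n:ℝ)^2)⁻¹ * (∑ i, ∑ j, ∑ k, |A i j k|)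
        = c * (((n:ℝ)^2)⁻¹ * (∑ i, ∑ j, ∑ k, |A i j k|)) := by ring
      _ ≤ c * ∑ k, |A i0 j0 k| := mul_le_mul_of_nonneg_left h2 hcpos.le
end

section
/- Let $1\le p,q,r\le\infty$. The unit ball of the injective tensor product $\ell_{p^*}^n\otimes_\epsilon\ell_{q^*}^n\otimes_\epsilon\ell_{r^*}^n$ (of real arrays $A=(A_{i,j,k})_{i,j,k=1}^n$) is contained in $2\,n^{\min(1/p,1/2)+\min(1/q,1/2)+1/r+1}\,B_1^{n^3}$, where $B_1^{n^3}$ is the unit ball of $\ell_1^{n^3}$. -/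
open Finset
open scoped ENNReal NNReal

/-- The injective tensor norm of an array `A` in `ℓ_{p*}^n ⊗_ε ℓ_{q*}^n ⊗_ε ℓ_{r*}^n`,
i.e. the norm of `A` as a trilinear form on `ℓ_p^n × ℓ_q^n × ℓ_r^n`. -/
noncomputable def injNorm3 (p q r : ℝ≥0∞) {n : ℕ} (A : Fin n → Fin n → Fin n → ℝ) : ℝ :=
  sSup {t : ℝ | ∃ x y z : Fin n → ℝ, pnorm p x ≤ 1 ∧ pnorm q y ≤ 1 ∧ pnorm r z ≤ 1 ∧
    t = |∑ i, ∑ j, ∑ k, A i j k * x i * y j * z k|}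

namespace Stmt4Aux

def sg (b : Bool) : ℝ := if b then 1 else -1

@[simp] lemma sg_mul_self (b : Bool) : sg b * sg b = 1 := by cases b <;> simp [sg]
@[simp] lemma abs_sg (b : Bool) : |sg b| = 1 := by cases b <;> simp [sg]
lemma sg_not (b : Bool) : sg (!b) = - sg b := by cases b <;> simp [sg]
lemma sg_mul_abs (t : ℝ) : sg (decide (0 ≤ t)) * t = |t| := by
  by_cases h : 0 ≤ t
  · simp [sg, h, abs_of_nonneg h]
  · simp [sg, h, abs_of_neg (lt_of_not_ge h)]

section Cube
variable {m : ℕ}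

def W (T : Finset (Fin m)) (s : Fin m → Bool) : ℝ := ∏ j ∈ T, sg (s j)

def fl (j : Fin m) (s : Fin m → Bool) : Fin m → Bool := Function.update s j (!(s j))

lemma fl_apply_self (j : Fin m) (s : Fin m → Bool) : fl j s j = !(s j) :=
  Function.update_self _ _ _

lemma fl_apply_ne {j j' : Fin m} (h : j' ≠ j) (s : Fin m → Bool) : fl j s j' = s j' :=
  Function.update_of_ne h _ _

lemma fl_invol (j : Fin m) : Function.Involutive (fl j) := by
  intro s
  unfold fl
  rw [Function.update_self, Bool.not_not, Function.update_idem, Function.update_eq_self]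

lemma sum_W_mul_W (s s' : Fin m → Bool) :
    ∑ T : Finset (Fin m), W T s * W T s' = if s = s' then (2:ℝ)^m else 0 := by
  have h1 : ∀ T : Finset (Fin m), W T s * W T s' = ∏ j ∈ T, (sg (s j) * sg (s' j)) := by
    intro T; rw [W, W, ← Finset.prod_mul_distrib]
  simp only [h1]
  have h2 := Finset.prod_add (fun j => sg (s j) * sg (s' j)) (fun _ => (1:ℝ)) Finset.univ
  simp only [Finset.prod_const_one, mul_one, Finset.powerset_univ] at h2
  rw [← h2]
  by_cases hss : s = s'
  · subst hss
    rw [if_pos rfl]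
    have : ∀ j ∈ (univ : Finset (Fin m)), sg (s j) * sg (s j) + 1 = 2 := by
      intro j _; rw [sg_mul_self]; norm_num
    rw [Finset.prod_congr rfl this, Finset.prod_const, Finset.card_univ, Fintype.card_fin]
  · obtain ⟨j0, hj0⟩ : ∃ j0, s j0 ≠ s' j0 := Function.ne_iff.mp hss
    rw [if_neg hss]
    apply Finset.prod_eq_zero (Finset.mem_univ j0)
    cases h : s j0 <;> cases h' : s' j0 <;> simp_all [sg]

lemma expand (g : (Fin m → Bool) → ℝ) (s : Fin m → Bool) :
    ∑ T : Finset (Fin m), (∑ s', g s' * W T s') * W T s = (2:ℝ)^m * g s := by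
  have h1 : ∀ T : Finset (Fin m), (∑ s', g s' * W T s') * W T s
      = ∑ s', g s' * (W T s' * W T s) := by
    intro T; rw [Finset.sum_mul]; exact Finset.sum_congr rfl fun s' _ => by ring
  simp only [h1]
  rw [Finset.sum_comm]
  have h2 : ∀ s', ∑ T : Finset (Fin m), g s' * (W T s' * W T s)
      = g s' * (if s' = s then (2:ℝ)^m else 0) := by
    intro s'; rw [← Finset.mul_sum, sum_W_mul_W]
  simp only [h2]
  simp only [mul_ite, mul_zero]
  rw [Finset.sum_ite_eq' univ s (fun s' => g s' * (2:ℝ)^m), if_pos (Finset.mem_univ s)]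
  ring

lemma parseval (g : (Fin m → Bool) → ℝ) :
    ∑ T : Finset (Fin m), (∑ s, g s * W T s)^2 = (2:ℝ)^m * ∑ s, g s ^2 := by
  calc ∑ T : Finset (Fin m), (∑ s, g s * W T s)^2
      = ∑ T : Finset (Fin m), ∑ s, g s * ((∑ s', g s' * W T s') * W T s) := by
        refine Finset.sum_congr rfl fun T _ => ?_
        rw [sq, Finset.sum_mul]
        exact Finset.sum_congr rfl fun s _ => by ring
    _ = ∑ s, g s * ((2:ℝ)^m * g s) := by
        rw [Finset.sum_comm]
        exact Finset.sum_congr rfl fun s _ => by rw [← Finset.mul_sum, expand]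
    _ = (2:ℝ)^m * ∑ s, g s^2 := by
        rw [Finset.mul_sum]; exact Finset.sum_congr rfl fun s _ => by ring

lemma W_fl (T : Finset (Fin m)) (j : Fin m) (s : Fin m → Bool) :
    W T (fl j s) = (if j ∈ T then (-1:ℝ) else 1) * W T s := by
  by_cases hj : j ∈ T
  · rw [if_pos hj, W, W, ← Finset.mul_prod_erase T _ hj,
      ← Finset.mul_prod_erase T (fun j' => sg (s j')) hj]
    have h1 : ∀ j' ∈ T.erase j, sg (fl j s j') = sg (s j') := fun j' hj' => by
      rw [fl_apply_ne (Finset.ne_of_mem_erase hj')]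
    rw [Finset.prod_congr rfl h1, fl_apply_self, sg_not]
    ring
  · rw [if_neg hj, one_mul, W, W]
    exact Finset.prod_congr rfl fun j' hj' => by
      rw [fl_apply_ne (by rintro rfl; exact hj hj')]

lemma corr (g : (Fin m → Bool) → ℝ) (j : Fin m) :
    (2:ℝ)^m * ∑ s, g s * g (fl j s)
    = ∑ T : Finset (Fin m), (if j ∈ T then (-1:ℝ) else 1) * (∑ s, g s * W T s)^2 := by
  calc (2:ℝ)^m * ∑ s, g s * g (fl j s)
      = ∑ s, g s * ((2:ℝ)^m * g (fl j s)) := by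
        rw [Finset.mul_sum]; exact Finset.sum_congr rfl fun s _ => by ring
    _ = ∑ s, g s * ∑ T : Finset (Fin m), (∑ s', g s' * W T s') * W T (fl j s) := by
        exact Finset.sum_congr rfl fun s _ => by rw [expand]
    _ = ∑ s, ∑ T : Finset (Fin m),
          ((if j ∈ T then (-1:ℝ) else 1) * (∑ s', g s' * W T s')) * (g s * W T s) := by
        refine Finset.sum_congr rfl fun s _ => ?_
        rw [Finset.mul_sum]
        refine Finset.sum_congr rfl fun T _ => ?_
        rw [W_fl]; ring
    _ = ∑ T : Finset (Fin m), (if j ∈ T then (-1:ℝ) else 1) * (∑ s, g s * W T s)^2 := by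
        rw [Finset.sum_comm]
        refine Finset.sum_congr rfl fun T _ => ?_
        rw [← Finset.mul_sum, sq]
        ring

-- flip all
lemma flA_invol : Function.Involutive (fun s : Fin m → Bool => fun j => !(s j)) := by
  intro s; simp

lemma card_cube : (Fintype.card (Fin m → Bool) : ℝ) = (2:ℝ)^m := by
  rw [Fintype.card_fun, Fintype.card_bool, Fintype.card_fin]; push_cast; ring

lemma coef_zero_of_odd (g : (Fin m → Bool) → ℝ)
    (hg : ∀ s, g (fun j => !(s j)) = g s) (T : Finset (Fin m)) (hT : ¬ Even T.card) :
    (∑ s, g s * W T s) = 0 := by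
  have hbij := flA_invol (m := m) |>.bijective
  have h1 := hbij.sum_comp (fun s => g s * W T s)
  have h2 : ∀ s : Fin m → Bool, g (fun j => !(s j)) * W T (fun j => !(s j))
      = ((-1:ℝ)^T.card) * (g s * W T s) := by
    intro s
    rw [hg]
    have : W T (fun j => !(s j)) = (-1:ℝ)^T.card * W T s := by
      rw [W, W]
      have : ∀ j ∈ T, sg (!(s j)) = (-1) * sg (s j) := fun j _ => by rw [sg_not]; ring
      rw [Finset.prod_congr rfl this, Finset.prod_mul_distrib, Finset.prod_const]
    rw [this]; ring
  rw [Finset.sum_congr rfl (fun s _ => h2 s)] at h1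
  rw [← Finset.mul_sum] at h1
  rw [(Nat.not_even_iff_odd.mp hT).neg_one_pow] at h1
  linarith

lemma orth (j j' : Fin m) :
    ∑ s : Fin m → Bool, sg (s j) * sg (s j') = if j = j' then (2:ℝ)^m else 0 := by
  by_cases h : j = j'
  · subst h
    rw [if_pos rfl]
    simp only [sg_mul_self]
    rw [Finset.sum_const, Finset.card_univ, nsmul_eq_mul, mul_one, card_cube]
  · rw [if_neg h]
    have hbij := (fl_invol j).bijective
    have h1 := hbij.sum_comp (fun s => sg (s j) * sg (s j'))
    have h2 : ∀ s : Fin m → Bool, sg (fl j s j) * sg (fl j s j')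
        = -(sg (s j) * sg (s j')) := by
      intro s
      rw [fl_apply_self, fl_apply_ne (fun hc => h hc.symm), sg_not]
      ring
    rw [Finset.sum_congr rfl (fun s _ => h2 s), Finset.sum_neg_distrib] at h1
    linarith

lemma sum_S_sq (c : Fin m → ℝ) :
    ∑ s : Fin m → Bool, (∑ j, sg (s j) * c j)^2 = (2:ℝ)^m * ∑ j, c j^2 := by
  calc ∑ s : Fin m → Bool, (∑ j, sg (s j) * c j)^2
      = ∑ s : Fin m → Bool, ∑ j, ∑ j', (c j * c j') * (sg (s j) * sg (s j')) := by
        refine Finset.sum_congr rfl fun s _ => ?_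
        rw [sq, Finset.sum_mul_sum]
        exact Finset.sum_congr rfl fun j _ => Finset.sum_congr rfl fun j' _ => by ring
    _ = ∑ j, ∑ j', (c j * c j') * ∑ s : Fin m → Bool, sg (s j) * sg (s j') := by
        rw [Finset.sum_comm]
        refine Finset.sum_congr rfl fun j _ => ?_
        rw [Finset.sum_comm]
        exact Finset.sum_congr rfl fun j' _ => by rw [← Finset.mul_sum]
    _ = ∑ j, (c j * c j) * (2:ℝ)^m := by
        refine Finset.sum_congr rfl fun j _ => ?_
        simp only [orth, mul_ite, mul_zero]
        rw [Finset.sum_ite_eq univ j (fun j' => (c j * c j') * (2:ℝ)^m), if_pos (Finset.mem_univ j)]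
    _ = (2:ℝ)^m * ∑ j, c j^2 := by
        rw [Finset.mul_sum]; exact Finset.sum_congr rfl fun j _ => by ring

lemma lipschitz (c : Fin m → ℝ) (j : Fin m) (s : Fin m → Bool) :
    (|∑ j', sg (s j') * c j'| - |∑ j', sg (fl j s j') * c j'|)^2 ≤ 4 * c j ^2 := by
  set S1 := ∑ j', sg (s j') * c j'
  set S2 := ∑ j', sg (fl j s j') * c j'
  have hdiff : S1 - S2 = 2 * sg (s j) * c j := by
    rw [← Finset.sum_sub_distrib]
    rw [Finset.sum_eq_single j]
    · rw [fl_apply_self, sg_not]; ring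
    · intro j' _ hj'
      rw [fl_apply_ne hj']; ring
    · intro h; exact absurd (Finset.mem_univ j) h
  have h1 : |S1| - |S2| ≤ |S1 - S2| := abs_sub_abs_le_abs_sub _ _
  have h2 : |S2| - |S1| ≤ |S2 - S1| := abs_sub_abs_le_abs_sub _ _
  have h3 : |S1 - S2| = 2 * |c j| := by
    rw [hdiff, abs_mul, abs_mul, abs_sg]
    norm_num
  have h4 : |S2 - S1| = 2 * |c j| := by rw [abs_sub_comm, h3]
  have h5 : |c j|^2 = c j ^2 := sq_abs _
  nlinarith [abs_nonneg (c j)]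


-- === Khintchine inequality with sharp constant sqrt 2 (Latala-Oleszkiewicz) ===
theorem khintchine (c : Fin m → ℝ) :
    (2:ℝ)^m * Real.sqrt (∑ j, c j ^ 2) ≤
      Real.sqrt 2 * ∑ s : Fin m → Bool, |∑ j, sg (s j) * c j| := by
  classical
  set g : (Fin m → Bool) → ℝ := fun s => |∑ j, sg (s j) * c j| with hgdef
  set a : Finset (Fin m) → ℝ := fun T => ∑ s, g s * W T s with hadef
  set N : ℝ := (2:ℝ)^m with hNdef
  have hN0 : (0:ℝ) ≤ N := by positivity
  have hNpos : (0:ℝ) < N := by positivity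
  have hg2 : ∑ s, g s ^ 2 = N * ∑ j, c j ^2 := by
    have h1 : ∀ s : Fin m → Bool, g s ^2 = (∑ j, sg (s j) * c j)^2 := fun s => sq_abs _
    rw [Finset.sum_congr rfl fun s _ => h1 s, sum_S_sq]
  have hpar : ∑ T : Finset (Fin m), a T ^2 = N * ∑ s, g s ^2 := parseval g
  have hgeven : ∀ s, g (fun j => !(s j)) = g s := by
    intro s
    simp only [hgdef]
    have h1 : ∑ j, sg (!(s j)) * c j = -∑ j, sg (s j) * c j := by
      rw [← Finset.sum_neg_distrib]
      exact Finset.sum_congr rfl fun j _ => by rw [sg_not]; ring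
    rw [h1, abs_neg]
  have hJ : ∀ j : Fin m, ∑ T : Finset (Fin m), (if j ∈ T then a T ^2 else 0)
      ≤ N^2 * c j ^2 := by
    intro j
    have e1 : ∑ T : Finset (Fin m), (if j ∈ T then (-1:ℝ) else 1) * a T ^2
        = N * ∑ s, g s * g (fl j s) := (corr g j).symm
    have e2 : ∑ s, g (fl j s) ^2 = ∑ s, g s ^2 :=
      (fl_invol j).bijective.sum_comp (fun s => g s ^2)
    have e3 : ∑ s, (g s - g (fl j s))^2 ≤ N * (4 * c j ^2) := by
      calc ∑ s, (g s - g (fl j s))^2 ≤ ∑ _s : Fin m → Bool, 4 * c j ^2 :=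
            Finset.sum_le_sum fun s _ => lipschitz c j s
        _ = N * (4 * c j ^2) := by
            rw [Finset.sum_const, Finset.card_univ, nsmul_eq_mul, card_cube]
    have e4 : ∑ s, (g s - g (fl j s))^2
        = 2 * (∑ s, g s ^2) - 2 * ∑ s, g s * g (fl j s) := by
      have h1 : ∀ s : Fin m → Bool, (g s - g (fl j s))^2
          = (g s ^2 + g (fl j s)^2) - 2 * (g s * g (fl j s)) := fun s => by ring
      rw [Finset.sum_congr rfl fun s _ => h1 s, Finset.sum_sub_distrib,
        Finset.sum_add_distrib, e2, ← Finset.mul_sum]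
      ring
    have e5 : ∑ T : Finset (Fin m), (if j ∈ T then a T ^2 else 0)
        = ((∑ T : Finset (Fin m), a T ^2)
           - ∑ T : Finset (Fin m), (if j ∈ T then (-1:ℝ) else 1) * a T ^2)/2 := by
      rw [← Finset.sum_sub_distrib, Finset.sum_div]
      exact Finset.sum_congr rfl fun T _ => by split <;> ring
    rw [e5, e1, hpar]
    nlinarith [e3, e4]
  have hcard : ∑ T : Finset (Fin m), (T.card : ℝ) * a T ^2 ≤ N^2 * ∑ j, c j ^2 := by
    have h1 : ∑ T : Finset (Fin m), (T.card : ℝ) * a T ^2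
        = ∑ j, ∑ T : Finset (Fin m), (if j ∈ T then a T ^2 else 0) := by
      rw [Finset.sum_comm]
      refine Finset.sum_congr rfl fun T _ => ?_
      rw [Finset.sum_ite_mem, Finset.univ_inter, Finset.sum_const, nsmul_eq_mul]
    rw [h1, Finset.mul_sum]
    exact Finset.sum_le_sum fun j _ => hJ j
  have hodd : ∀ T : Finset (Fin m), ¬ Even T.card → a T = 0 :=
    fun T hT => coef_zero_of_odd g hgeven T hT
  have h7 : (∑ T : Finset (Fin m), a T ^2) - a ∅ ^2
      ≤ (1/2) * ∑ T : Finset (Fin m), (T.card : ℝ) * a T ^2 := by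
    have hsplit : a ∅ ^2 + ∑ T ∈ (univ : Finset (Finset (Fin m))).erase ∅, a T ^2
        = ∑ T : Finset (Fin m), a T ^2 :=
      Finset.add_sum_erase _ (fun T => a T ^2) (Finset.mem_univ ∅)
    have hterm : ∀ T ∈ (univ : Finset (Finset (Fin m))).erase ∅,
        a T ^2 ≤ ((T.card : ℝ)/2) * a T ^2 := by
      intro T hT
      have hTne : T ≠ ∅ := (Finset.mem_erase.mp hT).1
      by_cases he : Even T.card
      · have h2 : 2 ≤ T.card := by
          rcases he with ⟨k, hk⟩
          have : T.card ≠ 0 := fun h0 => hTne (Finset.card_eq_zero.mp h0)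
          omega
        have h2' : (2:ℝ) ≤ (T.card : ℝ) := by exact_mod_cast h2
        nlinarith [sq_nonneg (a T)]
      · rw [hodd T he]; norm_num
    have h8 : ∑ T ∈ (univ : Finset (Finset (Fin m))).erase ∅, a T ^2
        ≤ ∑ T ∈ (univ : Finset (Finset (Fin m))).erase ∅, ((T.card : ℝ)/2) * a T ^2 :=
      Finset.sum_le_sum hterm
    have h9 : ∑ T ∈ (univ : Finset (Finset (Fin m))).erase ∅, ((T.card : ℝ)/2) * a T ^2
        ≤ ∑ T : Finset (Fin m), ((T.card : ℝ)/2) * a T ^2 :=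
      Finset.sum_le_sum_of_subset_of_nonneg (Finset.subset_univ _)
        (fun T _ _ => by positivity)
    have h10 : ∑ T : Finset (Fin m), ((T.card : ℝ)/2) * a T ^2
        = (1/2) * ∑ T : Finset (Fin m), (T.card : ℝ) * a T ^2 := by
      rw [Finset.mul_sum]
      exact Finset.sum_congr rfl fun T _ => by ring
    linarith
  have ha0 : a ∅ = ∑ s, g s := by
    simp only [hadef, W, Finset.prod_empty, mul_one]
  have key : N^2 * (∑ j, c j ^2) ≤ 2 * (∑ s, g s)^2 := by
    have h11 : ∑ T : Finset (Fin m), a T ^2 = N^2 * ∑ j, c j ^2 := by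
      rw [hpar, hg2]; ring
    rw [ha0] at h7
    linarith [h7, hcard, h11]
  have hgsum0 : (0:ℝ) ≤ ∑ s, g s := Finset.sum_nonneg fun s _ => abs_nonneg _
  calc N * Real.sqrt (∑ j, c j ^2) = Real.sqrt (N^2 * ∑ j, c j ^2) := by
        rw [Real.sqrt_mul (sq_nonneg N), Real.sqrt_sq hN0]
    _ ≤ Real.sqrt (2 * (∑ s, g s)^2) := Real.sqrt_le_sqrt key
    _ = Real.sqrt 2 * ∑ s, g s := by
        rw [Real.sqrt_mul (by norm_num), Real.sqrt_sq hgsum0]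

end Cube

-- === bilinear step: Cauchy-Schwarz + Khintchine ===
lemma step {n : ℕ} {κ : Type} [Fintype κ] (B : Fin n → κ → ℝ) (C : ℝ)
    (h : ∀ δ : Fin n → Bool, ∑ k : κ, |∑ j, sg (δ j) * B j k| ≤ C) :
    ∑ k : κ, ∑ j, |B j k| ≤ Real.sqrt 2 * Real.sqrt n * C := by
  have h1 : ∀ k : κ, ∑ j, |B j k| ≤ Real.sqrt n * Real.sqrt (∑ j, B j k ^2) := by
    intro k
    have hcs := Finset.sum_mul_sq_le_sq_mul_sq Finset.univ (fun j => |B j k|) (fun _ => (1:ℝ))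
    simp only [mul_one, one_pow, sq_abs] at hcs
    have hs1 : ∑ _j : Fin n, (1:ℝ) = (n:ℝ) := by
      rw [Finset.sum_const, Finset.card_univ, Fintype.card_fin, nsmul_eq_mul, mul_one]
    rw [hs1] at hcs
    have h0 : (0:ℝ) ≤ ∑ j, |B j k| := Finset.sum_nonneg fun j _ => abs_nonneg _
    calc ∑ j, |B j k| = Real.sqrt ((∑ j, |B j k|)^2) := (Real.sqrt_sq h0).symm
      _ ≤ Real.sqrt ((∑ j, B j k ^2) * n) := Real.sqrt_le_sqrt hcs
      _ = Real.sqrt n * Real.sqrt (∑ j, B j k ^2) := by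
          rw [Real.sqrt_mul (by positivity), mul_comm]
  have h2 : ∑ k : κ, Real.sqrt (∑ j, B j k ^2) ≤ Real.sqrt 2 * C := by
    have h3 : (2:ℝ)^n * ∑ k : κ, Real.sqrt (∑ j, B j k ^2)
        ≤ (2:ℝ)^n * (Real.sqrt 2 * C) := by
      rw [Finset.mul_sum]
      calc ∑ k : κ, (2:ℝ)^n * Real.sqrt (∑ j, B j k ^2)
          ≤ ∑ k : κ, Real.sqrt 2 * ∑ s : Fin n → Bool, |∑ j, sg (s j) * B j k| :=
            Finset.sum_le_sum fun k _ => khintchine (fun j => B j k)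
        _ = Real.sqrt 2 * ∑ s : Fin n → Bool, ∑ k : κ, |∑ j, sg (s j) * B j k| := by
            rw [← Finset.mul_sum, Finset.sum_comm]
        _ ≤ Real.sqrt 2 * ∑ _s : Fin n → Bool, C := by
            refine mul_le_mul_of_nonneg_left ?_ (Real.sqrt_nonneg 2)
            exact Finset.sum_le_sum fun s _ => h s
        _ = (2:ℝ)^n * (Real.sqrt 2 * C) := by
            rw [Finset.sum_const, Finset.card_univ, nsmul_eq_mul, card_cube]
            ring
    have hpow : (0:ℝ) < (2:ℝ)^n := by positivity
    exact le_of_mul_le_mul_left h3 hpow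
  calc ∑ k : κ, ∑ j, |B j k| ≤ ∑ k : κ, Real.sqrt n * Real.sqrt (∑ j, B j k ^2) :=
        Finset.sum_le_sum fun k _ => h1 k
    _ = Real.sqrt n * ∑ k : κ, Real.sqrt (∑ j, B j k ^2) := by rw [Finset.mul_sum]
    _ ≤ Real.sqrt n * (Real.sqrt 2 * C) :=
        mul_le_mul_of_nonneg_left h2 (Real.sqrt_nonneg _)
    _ = Real.sqrt 2 * Real.sqrt n * C := by ring

-- === sum manipulation helpers ===
lemma triple_reorg {n : ℕ} (A : Fin n → Fin n → Fin n → ℝ) (x y z : Fin n → ℝ) :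
    ∑ i, ∑ j, ∑ k, A i j k * x i * y j * z k
      = ∑ i, x i * ∑ j, y j * ∑ k, z k * A i j k := by
  simp only [Finset.mul_sum]
  exact Finset.sum_congr rfl fun i _ => Finset.sum_congr rfl fun j _ =>
    Finset.sum_congr rfl fun k _ => by ring

lemma triple_swap {n : ℕ} (F : Fin n → Fin n → Fin n → ℝ) :
    ∑ i, ∑ j, ∑ k, F i j k = ∑ k, ∑ j, ∑ i, F i j k := by
  calc ∑ i, ∑ j, ∑ k, F i j k = ∑ j, ∑ i, ∑ k, F i j k := Finset.sum_comm
    _ = ∑ j, ∑ k, ∑ i, F i j k := Finset.sum_congr rfl fun j _ => Finset.sum_comm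
    _ = ∑ k, ∑ j, ∑ i, F i j k := Finset.sum_comm

lemma sum_ev {n : ℕ} (i0 : Fin n) (F : Fin n → ℝ) :
    ∑ i, (if i = i0 then (1:ℝ) else 0) * F i = F i0 := by
  simp only [ite_mul, one_mul, zero_mul]
  rw [Finset.sum_ite_eq' univ i0 F, if_pos (Finset.mem_univ i0)]

lemma pull_one {n : ℕ} (c : ℝ) (u F : Fin n → ℝ) :
    ∑ i, (u i * c) * F i = c * ∑ i, u i * F i := by
  rw [Finset.mul_sum]; exact Finset.sum_congr rfl fun i _ => by ring

lemma pull_mid {n : ℕ} (c : ℝ) (u F : Fin n → ℝ) :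
    ∑ i, u i * (c * F i) = c * ∑ i, u i * F i := by
  rw [Finset.mul_sum]; exact Finset.sum_congr rfl fun i _ => by ring

lemma two_swap {n : ℕ} (y z : Fin n → ℝ) (M : Fin n → Fin n → ℝ) :
    ∑ j, y j * ∑ k, z k * M j k = ∑ k, z k * ∑ j, y j * M j k := by
  simp only [Finset.mul_sum]
  rw [Finset.sum_comm]
  exact Finset.sum_congr rfl fun k _ => Finset.sum_congr rfl fun j _ => by ring

lemma three_swap {n : ℕ} (x y z : Fin n → ℝ) (A : Fin n → Fin n → Fin n → ℝ) :
    ∑ i, x i * ∑ j, y j * ∑ k, z k * A i j k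
      = ∑ k, z k * ∑ j, y j * ∑ i, x i * A i j k := by
  calc ∑ i, x i * ∑ j, y j * ∑ k, z k * A i j k
      = ∑ i, ∑ j, ∑ k, x i * (y j * (z k * A i j k)) := by
        simp only [Finset.mul_sum]
    _ = ∑ k, ∑ j, ∑ i, x i * (y j * (z k * A i j k)) :=
        triple_swap (fun i j k => x i * (y j * (z k * A i j k)))
    _ = ∑ k, z k * ∑ j, y j * ∑ i, x i * A i j k := by
        simp only [Finset.mul_sum]
        exact Finset.sum_congr rfl fun k _ => Finset.sum_congr rfl fun j _ =>
          Finset.sum_congr rfl fun i _ => by ring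


-- === pnorm facts ===
lemma coord_le {P : ℝ≥0∞} (hP : 1 ≤ P) {n : ℕ} {x : Fin n → ℝ}
    (hx : pnorm P x ≤ 1) (i : Fin n) : |x i| ≤ 1 := by
  by_cases hPt : P = ⊤
  · rw [pnorm, if_pos hPt] at hx
    exact le_trans (le_ciSup (f := fun i => |x i|) (Set.Finite.bddAbove (Set.finite_range _)) i) hx
  · rw [pnorm, if_neg hPt] at hx
    have hP0 : P ≠ 0 := fun h0 => by rw [h0] at hP; exact absurd hP (by simp)
    have ht : 0 < P.toReal := ENNReal.toReal_pos hP0 hPt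
    have hS0 : (0:ℝ) ≤ ∑ i', |x i'| ^ P.toReal :=
      Finset.sum_nonneg fun i' _ => Real.rpow_nonneg (abs_nonneg _) _
    have hS1 : ∑ i', |x i'| ^ P.toReal ≤ 1 := by
      have h1 : ((∑ i', |x i'| ^ P.toReal) ^ (1/P.toReal)) ^ P.toReal ≤ 1 ^ P.toReal :=
        Real.rpow_le_rpow (Real.rpow_nonneg hS0 _) hx ht.le
      rwa [← Real.rpow_mul hS0, one_div, inv_mul_cancel₀ ht.ne', Real.rpow_one,
        Real.one_rpow] at h1
    have h2 : |x i| ^ P.toReal ≤ 1 :=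
      le_trans (Finset.single_le_sum (fun i' _ => Real.rpow_nonneg (abs_nonneg _) _)
        (Finset.mem_univ i)) hS1
    by_contra hgt
    push_neg at hgt
    have h3 : (1:ℝ) < |x i| ^ P.toReal := by
      calc (1:ℝ) = 1 ^ P.toReal := (Real.one_rpow _).symm
        _ < |x i| ^ P.toReal := Real.rpow_lt_rpow zero_le_one hgt ht
    linarith

lemma pnorm_e {P : ℝ≥0∞} (hP : 1 ≤ P) {n : ℕ} (i0 : Fin n) :
    pnorm P (fun i => if i = i0 then (1:ℝ) else 0) ≤ 1 := by
  by_cases hPt : P = ⊤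
  · rw [pnorm, if_pos hPt]
    have : Nonempty (Fin n) := ⟨i0⟩
    refine ciSup_le fun i => ?_
    split <;> simp
  · rw [pnorm, if_neg hPt]
    have hP0 : P ≠ 0 := fun h0 => by rw [h0] at hP; exact absurd hP (by simp)
    have ht : 0 < P.toReal := ENNReal.toReal_pos hP0 hPt
    have h1 : ∀ i : Fin n, |if i = i0 then (1:ℝ) else 0| ^ P.toReal
        = if i = i0 then (1:ℝ) else 0 := by
      intro i; split
      · simp
      · simp [Real.zero_rpow ht.ne']
    rw [Finset.sum_congr rfl fun i _ => h1 i,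
      Finset.sum_ite_eq' univ i0 (fun _ => (1:ℝ)), if_pos (Finset.mem_univ i0),
      Real.one_rpow]

lemma pnorm_sign {P : ℝ≥0∞} (hP : 1 ≤ P) {n : ℕ} (hn : 0 < n) (s : Fin n → Bool) :
    pnorm P (fun i => sg (s i) * (n:ℝ) ^ (-(1/P).toReal)) ≤ 1 := by
  have hnR : (0:ℝ) < (n:ℝ) := by exact_mod_cast hn
  by_cases hPt : P = ⊤
  · subst hPt
    rw [pnorm, if_pos rfl]
    have : Nonempty (Fin n) := ⟨⟨0, hn⟩⟩
    refine ciSup_le fun i => ?_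
    simp [ENNReal.div_top, abs_mul]
  · rw [pnorm, if_neg hPt]
    have hP0 : P ≠ 0 := fun h0 => by rw [h0] at hP; exact absurd hP (by simp)
    have ht : 0 < P.toReal := ENNReal.toReal_pos hP0 hPt
    have hexp : (1/P).toReal = (P.toReal)⁻¹ := by rw [one_div, ENNReal.toReal_inv]
    have hterm : ∀ i : Fin n,
        |sg (s i) * (n:ℝ) ^ (-(1/P).toReal)| ^ P.toReal = ((n:ℝ))⁻¹ := by
      intro i
      rw [abs_mul, abs_sg, one_mul, abs_of_nonneg (Real.rpow_nonneg hnR.le _), hexp,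
        ← Real.rpow_mul hnR.le, show -(P.toReal)⁻¹ * P.toReal = -1 by
          field_simp, Real.rpow_neg_one]
    rw [Finset.sum_congr rfl fun i _ => hterm i, Finset.sum_const, Finset.card_univ,
      Fintype.card_fin, nsmul_eq_mul, mul_inv_cancel₀ hnR.ne', Real.one_rpow]

end Stmt4Aux

set_option maxHeartbeats 1600000 in
open Stmt4Aux in
theorem stmt4 (n : ℕ) (p q r : ℝ≥0∞) (hp : 1 ≤ p) (hq : 1 ≤ q) (hr : 1 ≤ r) :
    {A : Fin n → Fin n → Fin n → ℝ | injNorm3 p q r A ≤ 1} ⊆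
      {A : Fin n → Fin n → Fin n → ℝ | ∑ i, ∑ j, ∑ k, |A i j k| ≤
        2 * (n : ℝ) ^ (min (1 / p).toReal (1 / 2) + min (1 / q).toReal (1 / 2)
          + (1 / r).toReal + 1)} := by
  intro A hA
  simp only [Set.mem_setOf_eq] at hA ⊢
  rcases Nat.eq_zero_or_pos n with hn0 | hn
  · subst hn0
    simp only [Finset.univ_eq_empty, Finset.sum_empty]
    positivity
  have hnR : (0:ℝ) < (n:ℝ) := by exact_mod_cast hn
  have hne : ∀ a b : ℝ, (n:ℝ)^a * (n:ℝ)^b = (n:ℝ)^(a+b) :=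
    fun a b => (Real.rpow_add hnR a b).symm
  rw [injNorm3] at hA
  have hbdd : BddAbove {t : ℝ | ∃ x y z : Fin n → ℝ, pnorm p x ≤ 1 ∧ pnorm q y ≤ 1 ∧
      pnorm r z ≤ 1 ∧ t = |∑ i, ∑ j, ∑ k, A i j k * x i * y j * z k|} := by
    refine ⟨∑ i, ∑ j, ∑ k, |A i j k|, ?_⟩
    rintro t ⟨x, y, z, hx, hy, hz, rfl⟩
    refine le_trans (Finset.abs_sum_le_sum_abs _ _) (Finset.sum_le_sum fun i _ => ?_)
    refine le_trans (Finset.abs_sum_le_sum_abs _ _) (Finset.sum_le_sum fun j _ => ?_)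
    refine le_trans (Finset.abs_sum_le_sum_abs _ _) (Finset.sum_le_sum fun k _ => ?_)
    have h1 := coord_le hp hx i
    have h2 := coord_le hq hy j
    have h3 := coord_le hr hz k
    rw [abs_mul, abs_mul, abs_mul]
    nlinarith [abs_nonneg (A i j k), abs_nonneg (x i), abs_nonneg (y j), abs_nonneg (z k),
      mul_nonneg (abs_nonneg (A i j k)) (abs_nonneg (x i)),
      mul_nonneg (mul_nonneg (abs_nonneg (A i j k)) (abs_nonneg (x i))) (abs_nonneg (y j))]
  have H : ∀ x y z : Fin n → ℝ, pnorm p x ≤ 1 → pnorm q y ≤ 1 → pnorm r z ≤ 1 →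
      |∑ i, ∑ j, ∑ k, A i j k * x i * y j * z k| ≤ 1 := fun x y z hx hy hz =>
    le_trans (le_csSup hbdd ⟨x, y, z, hx, hy, hz, rfl⟩) hA
  have CORE : ∀ x y : Fin n → ℝ, pnorm p x ≤ 1 → pnorm q y ≤ 1 → ∀ ζ : Fin n → Bool,
      |∑ i, x i * ∑ j, y j * ∑ k, sg (ζ k) * A i j k| ≤ (n:ℝ) ^ (1/r).toReal := by
    intro x y hx hy ζ
    have hw : (0:ℝ) < (n:ℝ) ^ (-(1/r).toReal) := Real.rpow_pos_of_pos hnR _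
    have h1 : |∑ i, ∑ j, ∑ k, A i j k * x i * y j *
        (sg (ζ k) * (n:ℝ) ^ (-(1/r).toReal))| ≤ 1 :=
      H x y (fun k => sg (ζ k) * (n:ℝ) ^ (-(1/r).toReal)) hx hy (pnorm_sign hr hn ζ)
    have h2 : ∑ i, ∑ j, ∑ k, A i j k * x i * y j * (sg (ζ k) * (n:ℝ) ^ (-(1/r).toReal))
        = (n:ℝ) ^ (-(1/r).toReal) * ∑ i, x i * ∑ j, y j * ∑ k, sg (ζ k) * A i j k := by
      rw [triple_reorg]
      simp only [pull_one, pull_mid]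
    rw [h2, abs_mul, abs_of_nonneg hw.le] at h1
    have h3 : (n:ℝ) ^ (-(1/r).toReal) * (n:ℝ) ^ ((1/r).toReal) = 1 := by
      rw [hne]; simp
    calc |∑ i, x i * ∑ j, y j * ∑ k, sg (ζ k) * A i j k|
        = (n:ℝ) ^ (-(1/r).toReal) * |∑ i, x i * ∑ j, y j * ∑ k, sg (ζ k) * A i j k|
            * (n:ℝ) ^ ((1/r).toReal) := by
          rw [mul_comm ((n:ℝ) ^ (-(1/r).toReal)), mul_assoc, h3, mul_one]
      _ ≤ 1 * (n:ℝ) ^ ((1/r).toReal) :=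
          mul_le_mul_of_nonneg_right h1 (Real.rpow_nonneg hnR.le _)
      _ = (n:ℝ) ^ ((1/r).toReal) := one_mul _
  -- T1
  have T1 : ∀ i0 j0 : Fin n, ∑ k, |A i0 j0 k| ≤ (n:ℝ) ^ ((1/r).toReal) := by
    intro i0 j0
    have h1 : |∑ i, (if i = i0 then (1:ℝ) else 0) * ∑ j, (if j = j0 then (1:ℝ) else 0) *
        ∑ k, sg (decide (0 ≤ A i0 j0 k)) * A i j k| ≤ (n:ℝ) ^ ((1/r).toReal) :=
      CORE (fun i => if i = i0 then 1 else 0) (fun j => if j = j0 then 1 else 0)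
        (pnorm_e hp i0) (pnorm_e hq j0) (fun k => decide (0 ≤ A i0 j0 k))
    rw [sum_ev, sum_ev] at h1
    have h2 : ∑ k, sg (decide (0 ≤ A i0 j0 k)) * A i0 j0 k = ∑ k, |A i0 j0 k| :=
      Finset.sum_congr rfl fun k _ => sg_mul_abs _
    rwa [h2, abs_of_nonneg (Finset.sum_nonneg fun k _ => abs_nonneg _)] at h1
  -- T2
  have T2 : ∀ i0 : Fin n, ∀ δ : Fin n → Bool,
      ∑ k, |∑ j, sg (δ j) * A i0 j k| ≤ (n:ℝ) ^ ((1/q).toReal + (1/r).toReal) := by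
    intro i0 δ
    have hv : (0:ℝ) < (n:ℝ) ^ (-(1/q).toReal) := Real.rpow_pos_of_pos hnR _
    have h1 : |∑ i, (if i = i0 then (1:ℝ) else 0) *
        ∑ j, (sg (δ j) * (n:ℝ) ^ (-(1/q).toReal)) *
          ∑ k, sg (decide (0 ≤ ∑ j', sg (δ j') * A i0 j' k)) * A i j k|
        ≤ (n:ℝ) ^ ((1/r).toReal) :=
      CORE (fun i => if i = i0 then 1 else 0)
        (fun j => sg (δ j) * (n:ℝ) ^ (-(1/q).toReal)) (pnorm_e hp i0) (pnorm_sign hq hn δ)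
        (fun k => decide (0 ≤ ∑ j', sg (δ j') * A i0 j' k))
    rw [sum_ev, pull_one, two_swap] at h1
    have h2 : ∑ k, sg (decide (0 ≤ ∑ j', sg (δ j') * A i0 j' k)) *
        ∑ j, sg (δ j) * A i0 j k = ∑ k, |∑ j, sg (δ j) * A i0 j k| :=
      Finset.sum_congr rfl fun k _ => sg_mul_abs _
    rw [h2, abs_mul, abs_of_nonneg hv.le,
      abs_of_nonneg (Finset.sum_nonneg fun k _ => abs_nonneg _)] at h1
    have h3 : (n:ℝ) ^ (-(1/q).toReal) * (n:ℝ) ^ ((1/q).toReal) = 1 := by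
      rw [hne]; simp
    calc ∑ k, |∑ j, sg (δ j) * A i0 j k|
        = (n:ℝ) ^ (-(1/q).toReal) * (∑ k, |∑ j, sg (δ j) * A i0 j k|)
            * (n:ℝ) ^ ((1/q).toReal) := by
          rw [mul_comm ((n:ℝ) ^ (-(1/q).toReal)), mul_assoc, h3, mul_one]
      _ ≤ (n:ℝ) ^ ((1/r).toReal) * (n:ℝ) ^ ((1/q).toReal) :=
          mul_le_mul_of_nonneg_right h1 (Real.rpow_nonneg hnR.le _)
      _ = (n:ℝ) ^ ((1/q).toReal + (1/r).toReal) := by rw [hne, add_comm]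
  -- T3
  have T3 : ∀ j0 : Fin n, ∀ ε : Fin n → Bool,
      ∑ k, |∑ i, sg (ε i) * A i j0 k| ≤ (n:ℝ) ^ ((1/p).toReal + (1/r).toReal) := by
    intro j0 ε
    have hu : (0:ℝ) < (n:ℝ) ^ (-(1/p).toReal) := Real.rpow_pos_of_pos hnR _
    have h1 : |∑ i, (sg (ε i) * (n:ℝ) ^ (-(1/p).toReal)) *
        ∑ j, (if j = j0 then (1:ℝ) else 0) *
          ∑ k, sg (decide (0 ≤ ∑ i', sg (ε i') * A i' j0 k)) * A i j k|
        ≤ (n:ℝ) ^ ((1/r).toReal) :=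
      CORE (fun i => sg (ε i) * (n:ℝ) ^ (-(1/p).toReal))
        (fun j => if j = j0 then 1 else 0) (pnorm_sign hp hn ε) (pnorm_e hq j0)
        (fun k => decide (0 ≤ ∑ i', sg (ε i') * A i' j0 k))
    rw [pull_one] at h1
    simp only [sum_ev] at h1
    rw [two_swap] at h1
    have h2 : ∑ k, sg (decide (0 ≤ ∑ i', sg (ε i') * A i' j0 k)) *
        ∑ i, sg (ε i) * A i j0 k = ∑ k, |∑ i, sg (ε i) * A i j0 k| :=
      Finset.sum_congr rfl fun k _ => sg_mul_abs _
    rw [h2, abs_mul, abs_of_nonneg hu.le,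
      abs_of_nonneg (Finset.sum_nonneg fun k _ => abs_nonneg _)] at h1
    have h3 : (n:ℝ) ^ (-(1/p).toReal) * (n:ℝ) ^ ((1/p).toReal) = 1 := by
      rw [hne]; simp
    calc ∑ k, |∑ i, sg (ε i) * A i j0 k|
        = (n:ℝ) ^ (-(1/p).toReal) * (∑ k, |∑ i, sg (ε i) * A i j0 k|)
            * (n:ℝ) ^ ((1/p).toReal) := by
          rw [mul_comm ((n:ℝ) ^ (-(1/p).toReal)), mul_assoc, h3, mul_one]
      _ ≤ (n:ℝ) ^ ((1/r).toReal) * (n:ℝ) ^ ((1/p).toReal) :=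
          mul_le_mul_of_nonneg_right h1 (Real.rpow_nonneg hnR.le _)
      _ = (n:ℝ) ^ ((1/p).toReal + (1/r).toReal) := by rw [hne, add_comm]
  -- T4
  have T4 : ∀ ε δ : Fin n → Bool,
      ∑ k, |∑ j, sg (δ j) * ∑ i, sg (ε i) * A i j k|
        ≤ (n:ℝ) ^ ((1/p).toReal + (1/q).toReal + (1/r).toReal) := by
    intro ε δ
    have hu : (0:ℝ) < (n:ℝ) ^ (-(1/p).toReal) := Real.rpow_pos_of_pos hnR _
    have hv : (0:ℝ) < (n:ℝ) ^ (-(1/q).toReal) := Real.rpow_pos_of_pos hnR _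
    have h1 : |∑ i, (sg (ε i) * (n:ℝ) ^ (-(1/p).toReal)) *
        ∑ j, (sg (δ j) * (n:ℝ) ^ (-(1/q).toReal)) *
          ∑ k, sg (decide (0 ≤ ∑ j', sg (δ j') * ∑ i', sg (ε i') * A i' j' k)) * A i j k|
        ≤ (n:ℝ) ^ ((1/r).toReal) :=
      CORE (fun i => sg (ε i) * (n:ℝ) ^ (-(1/p).toReal))
        (fun j => sg (δ j) * (n:ℝ) ^ (-(1/q).toReal)) (pnorm_sign hp hn ε)
        (pnorm_sign hq hn δ)
        (fun k => decide (0 ≤ ∑ j', sg (δ j') * ∑ i', sg (ε i') * A i' j' k))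
    rw [pull_one] at h1
    simp only [pull_one, pull_mid] at h1
    rw [three_swap] at h1
    have h2 : ∑ k, sg (decide (0 ≤ ∑ j', sg (δ j') * ∑ i', sg (ε i') * A i' j' k)) *
        ∑ j, sg (δ j) * ∑ i, sg (ε i) * A i j k
        = ∑ k, |∑ j, sg (δ j) * ∑ i, sg (ε i) * A i j k| :=
      Finset.sum_congr rfl fun k _ => sg_mul_abs _
    rw [h2, abs_mul, abs_mul, abs_of_nonneg hu.le, abs_of_nonneg hv.le,
      abs_of_nonneg (Finset.sum_nonneg fun k _ => abs_nonneg _)] at h1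
    have h3 : (n:ℝ) ^ (-(1/p).toReal) * (n:ℝ) ^ ((1/p).toReal) = 1 := by
      rw [hne]; simp
    have h4 : (n:ℝ) ^ (-(1/q).toReal) * (n:ℝ) ^ ((1/q).toReal) = 1 := by
      rw [hne]; simp
    have h5 : ∑ k, |∑ j, sg (δ j) * ∑ i, sg (ε i) * A i j k|
        = ((n:ℝ) ^ (-(1/p).toReal) * ((n:ℝ) ^ (-(1/q).toReal) *
            ∑ k, |∑ j, sg (δ j) * ∑ i, sg (ε i) * A i j k|))
          * ((n:ℝ) ^ ((1/p).toReal) * (n:ℝ) ^ ((1/q).toReal)) := by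
      have hx : ((n:ℝ) ^ (-(1/p).toReal) * ((n:ℝ) ^ (-(1/q).toReal) *
            ∑ k, |∑ j, sg (δ j) * ∑ i, sg (ε i) * A i j k|))
          * ((n:ℝ) ^ ((1/p).toReal) * (n:ℝ) ^ ((1/q).toReal))
          = (∑ k, |∑ j, sg (δ j) * ∑ i, sg (ε i) * A i j k|) *
            (((n:ℝ) ^ (-(1/p).toReal) * (n:ℝ) ^ ((1/p).toReal)) *
             ((n:ℝ) ^ (-(1/q).toReal) * (n:ℝ) ^ ((1/q).toReal))) := by ring
      rw [hx, h3, h4]; ring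
    calc ∑ k, |∑ j, sg (δ j) * ∑ i, sg (ε i) * A i j k|
        = ((n:ℝ) ^ (-(1/p).toReal) * ((n:ℝ) ^ (-(1/q).toReal) *
            ∑ k, |∑ j, sg (δ j) * ∑ i, sg (ε i) * A i j k|))
          * ((n:ℝ) ^ ((1/p).toReal) * (n:ℝ) ^ ((1/q).toReal)) := h5
      _ ≤ (n:ℝ) ^ ((1/r).toReal) * ((n:ℝ) ^ ((1/p).toReal) * (n:ℝ) ^ ((1/q).toReal)) := by
          refine mul_le_mul_of_nonneg_right h1 ?_
          positivity
      _ = (n:ℝ) ^ ((1/p).toReal + (1/q).toReal + (1/r).toReal) := by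
          rw [hne, hne]
          congr 1
          ring
  -- case analysis
  rcases le_total (1/2 : ℝ) ((1/p).toReal) with h1 | h1 <;>
    rcases le_total (1/2 : ℝ) ((1/q).toReal) with h2 | h2
  -- Case A : both ≥ 1/2
  · rw [min_eq_right h1, min_eq_right h2]
    have hb : ∑ i, ∑ j, ∑ k, |A i j k| ≤ (n:ℝ) * ((n:ℝ) * (n:ℝ) ^ ((1/r).toReal)) := by
      calc ∑ i, ∑ j, ∑ k, |A i j k|
          ≤ ∑ _i : Fin n, ∑ _j : Fin n, (n:ℝ) ^ ((1/r).toReal) :=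
            Finset.sum_le_sum fun i _ => Finset.sum_le_sum fun j _ => T1 i j
        _ = (n:ℝ) * ((n:ℝ) * (n:ℝ) ^ ((1/r).toReal)) := by
            simp [Finset.sum_const, Finset.card_univ, mul_assoc]
    have he : (n:ℝ) * ((n:ℝ) * (n:ℝ) ^ ((1/r).toReal))
        = (n:ℝ) ^ ((1:ℝ) + ((1:ℝ) + (1/r).toReal)) := by
      calc (n:ℝ) * ((n:ℝ) * (n:ℝ) ^ ((1/r).toReal))
          = (n:ℝ)^(1:ℝ) * ((n:ℝ)^(1:ℝ) * (n:ℝ) ^ ((1/r).toReal)) := by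
            rw [Real.rpow_one]
        _ = (n:ℝ) ^ ((1:ℝ) + ((1:ℝ) + (1/r).toReal)) := by rw [hne, hne]
    have hE : (1:ℝ) + ((1:ℝ) + (1/r).toReal) = 1/2 + 1/2 + (1/r).toReal + 1 := by ring
    rw [he, hE] at hb
    have := Real.rpow_nonneg hnR.le (1/2 + 1/2 + (1/r).toReal + 1)
    linarith
  -- Case B : tp ≥ 1/2, tq ≤ 1/2
  · rw [min_eq_right h1, min_eq_left h2]
    have hb : ∑ i, ∑ j, ∑ k, |A i j k|
        ≤ (n:ℝ) * (Real.sqrt 2 * Real.sqrt (n:ℝ) *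
            (n:ℝ) ^ ((1/q).toReal + (1/r).toReal)) := by
      calc ∑ i, ∑ j, ∑ k, |A i j k|
          ≤ ∑ _i : Fin n, Real.sqrt 2 * Real.sqrt (n:ℝ) *
              (n:ℝ) ^ ((1/q).toReal + (1/r).toReal) := by
            refine Finset.sum_le_sum fun i0 _ => ?_
            calc ∑ j, ∑ k, |A i0 j k| = ∑ k, ∑ j, |A i0 j k| := Finset.sum_comm
              _ ≤ _ := step (fun j k => A i0 j k)
                  ((n:ℝ) ^ ((1/q).toReal + (1/r).toReal)) (T2 i0)
        _ = (n:ℝ) * (Real.sqrt 2 * Real.sqrt (n:ℝ) *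
              (n:ℝ) ^ ((1/q).toReal + (1/r).toReal)) := by
            simp [Finset.sum_const, Finset.card_univ]
    have hs2 : Real.sqrt 2 ≤ 2 := by
      nlinarith [Real.sq_sqrt (by norm_num : (0:ℝ) ≤ 2), Real.sqrt_nonneg 2]
    have heq : (n:ℝ) * (Real.sqrt 2 * Real.sqrt (n:ℝ) *
          (n:ℝ) ^ ((1/q).toReal + (1/r).toReal))
        = Real.sqrt 2 * (n:ℝ) ^ ((1:ℝ) + ((1:ℝ)/2 + ((1/q).toReal + (1/r).toReal))) := by
      calc (n:ℝ) * (Real.sqrt 2 * Real.sqrt (n:ℝ) * (n:ℝ) ^ ((1/q).toReal + (1/r).toReal))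
          = Real.sqrt 2 * ((n:ℝ)^(1:ℝ) * ((n:ℝ)^((1:ℝ)/2) *
              (n:ℝ) ^ ((1/q).toReal + (1/r).toReal))) := by
            rw [Real.sqrt_eq_rpow (n:ℝ), Real.rpow_one]; ring
        _ = Real.sqrt 2 * (n:ℝ) ^ ((1:ℝ) + ((1:ℝ)/2 + ((1/q).toReal + (1/r).toReal))) := by
            rw [hne, hne]
    rw [heq] at hb
    have hE : (1:ℝ) + ((1:ℝ)/2 + ((1/q).toReal + (1/r).toReal))
        = 1/2 + (1/q).toReal + (1/r).toReal + 1 := by ring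
    rw [hE] at hb
    have hfin : Real.sqrt 2 * (n:ℝ) ^ (1/2 + (1/q).toReal + (1/r).toReal + 1)
        ≤ 2 * (n:ℝ) ^ (1/2 + (1/q).toReal + (1/r).toReal + 1) :=
      mul_le_mul_of_nonneg_right hs2 (Real.rpow_nonneg hnR.le _)
    linarith
  -- Case C : tp ≤ 1/2, tq ≥ 1/2
  · rw [min_eq_left h1, min_eq_right h2]
    have hb : ∑ i, ∑ j, ∑ k, |A i j k|
        ≤ (n:ℝ) * (Real.sqrt 2 * Real.sqrt (n:ℝ) *
            (n:ℝ) ^ ((1/p).toReal + (1/r).toReal)) := by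
      calc ∑ i, ∑ j, ∑ k, |A i j k| = ∑ j, ∑ i, ∑ k, |A i j k| := Finset.sum_comm
        _ ≤ ∑ _j : Fin n, Real.sqrt 2 * Real.sqrt (n:ℝ) *
              (n:ℝ) ^ ((1/p).toReal + (1/r).toReal) := by
            refine Finset.sum_le_sum fun j0 _ => ?_
            calc ∑ i, ∑ k, |A i j0 k| = ∑ k, ∑ i, |A i j0 k| := Finset.sum_comm
              _ ≤ _ := step (fun i k => A i j0 k)
                  ((n:ℝ) ^ ((1/p).toReal + (1/r).toReal)) (T3 j0)
        _ = (n:ℝ) * (Real.sqrt 2 * Real.sqrt (n:ℝ) *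
              (n:ℝ) ^ ((1/p).toReal + (1/r).toReal)) := by
            simp [Finset.sum_const, Finset.card_univ]
    have hs2 : Real.sqrt 2 ≤ 2 := by
      nlinarith [Real.sq_sqrt (by norm_num : (0:ℝ) ≤ 2), Real.sqrt_nonneg 2]
    have heq : (n:ℝ) * (Real.sqrt 2 * Real.sqrt (n:ℝ) *
          (n:ℝ) ^ ((1/p).toReal + (1/r).toReal))
        = Real.sqrt 2 * (n:ℝ) ^ ((1:ℝ) + ((1:ℝ)/2 + ((1/p).toReal + (1/r).toReal))) := by
      calc (n:ℝ) * (Real.sqrt 2 * Real.sqrt (n:ℝ) * (n:ℝ) ^ ((1/p).toReal + (1/r).toReal))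
          = Real.sqrt 2 * ((n:ℝ)^(1:ℝ) * ((n:ℝ)^((1:ℝ)/2) *
              (n:ℝ) ^ ((1/p).toReal + (1/r).toReal))) := by
            rw [Real.sqrt_eq_rpow (n:ℝ), Real.rpow_one]; ring
        _ = Real.sqrt 2 * (n:ℝ) ^ ((1:ℝ) + ((1:ℝ)/2 + ((1/p).toReal + (1/r).toReal))) := by
            rw [hne, hne]
    rw [heq] at hb
    have hE : (1:ℝ) + ((1:ℝ)/2 + ((1/p).toReal + (1/r).toReal))
        = (1/p).toReal + 1/2 + (1/r).toReal + 1 := by ring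
    rw [hE] at hb
    have hfin : Real.sqrt 2 * (n:ℝ) ^ ((1/p).toReal + 1/2 + (1/r).toReal + 1)
        ≤ 2 * (n:ℝ) ^ ((1/p).toReal + 1/2 + (1/r).toReal + 1) :=
      mul_le_mul_of_nonneg_right hs2 (Real.rpow_nonneg hnR.le _)
    linarith
  -- Case D : both ≤ 1/2
  · rw [min_eq_left h1, min_eq_left h2]
    have houterhyp : ∀ ε : Fin n → Bool,
        ∑ jk : Fin n × Fin n, |∑ i, sg (ε i) * A i jk.1 jk.2|
          ≤ Real.sqrt 2 * Real.sqrt (n:ℝ) *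
            (n:ℝ) ^ ((1/p).toReal + (1/q).toReal + (1/r).toReal) := by
      intro ε
      have hin := step (fun j k => ∑ i, sg (ε i) * A i j k)
        ((n:ℝ) ^ ((1/p).toReal + (1/q).toReal + (1/r).toReal)) (T4 ε)
      calc ∑ jk : Fin n × Fin n, |∑ i, sg (ε i) * A i jk.1 jk.2|
          = ∑ j, ∑ k, |∑ i, sg (ε i) * A i j k| :=
            Fintype.sum_prod_type (fun jk : Fin n × Fin n => |∑ i, sg (ε i) * A i jk.1 jk.2|)
        _ = ∑ k, ∑ j, |∑ i, sg (ε i) * A i j k| := Finset.sum_comm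
        _ ≤ _ := hin
    have houter := step (fun i (jk : Fin n × Fin n) => A i jk.1 jk.2)
      (Real.sqrt 2 * Real.sqrt (n:ℝ) *
        (n:ℝ) ^ ((1/p).toReal + (1/q).toReal + (1/r).toReal)) houterhyp
    have hre : ∑ i, ∑ j, ∑ k, |A i j k|
        = ∑ jk : Fin n × Fin n, ∑ i, |A i jk.1 jk.2| := by
      calc ∑ i, ∑ j, ∑ k, |A i j k|
          = ∑ i, ∑ jk : Fin n × Fin n, |A i jk.1 jk.2| :=
            Finset.sum_congr rfl fun i _ =>
              (Fintype.sum_prod_type (fun jk : Fin n × Fin n => |A i jk.1 jk.2|)).symm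
        _ = ∑ jk : Fin n × Fin n, ∑ i, |A i jk.1 jk.2| := Finset.sum_comm
    rw [hre]
    have h2n : Real.sqrt 2 * Real.sqrt (n:ℝ) * (Real.sqrt 2 * Real.sqrt (n:ℝ) *
          (n:ℝ) ^ ((1/p).toReal + (1/q).toReal + (1/r).toReal))
        = 2 * (n:ℝ) ^ ((1/p).toReal + (1/q).toReal + (1/r).toReal + 1) := by
      have ha : Real.sqrt 2 * Real.sqrt 2 = 2 := Real.mul_self_sqrt (by norm_num)
      have hb2 : Real.sqrt (n:ℝ) * Real.sqrt (n:ℝ) = (n:ℝ) := Real.mul_self_sqrt hnR.le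
      calc Real.sqrt 2 * Real.sqrt (n:ℝ) * (Real.sqrt 2 * Real.sqrt (n:ℝ) *
            (n:ℝ) ^ ((1/p).toReal + (1/q).toReal + (1/r).toReal))
          = (Real.sqrt 2 * Real.sqrt 2) * ((Real.sqrt (n:ℝ) * Real.sqrt (n:ℝ)) *
              (n:ℝ) ^ ((1/p).toReal + (1/q).toReal + (1/r).toReal)) := by ring
        _ = 2 * ((n:ℝ)^(1:ℝ) *
              (n:ℝ) ^ ((1/p).toReal + (1/q).toReal + (1/r).toReal)) := by
            rw [ha, hb2, Real.rpow_one]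
        _ = 2 * (n:ℝ) ^ ((1/p).toReal + (1/q).toReal + (1/r).toReal + 1) := by
            rw [hne]
            congr 2
            ring
    calc ∑ jk : Fin n × Fin n, ∑ i, |A i jk.1 jk.2| ≤ _ := houter
      _ = 2 * (n:ℝ) ^ ((1/p).toReal + (1/q).toReal + (1/r).toReal + 1) := h2n
end

section
/- Let $n\in\mathbb{N}$ and $1\le p,q,r\le\infty$. Then $\|\mathrm{id}:\ell_2^{n^3}\to\ell_p^n\otimes_\pi\ell_q^n\otimes_\pi\ell_r^n\| \le n^{\min(1/r,1/2)}\cdot\|\mathrm{id}:\ell_2^{n^2}\to\ell_p^n\otimes_\pi\ell_q^n\|$. -/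
open Finset
open scoped ENNReal NNReal

/-- The projective tensor norm on `ℝ^n ⊗ ℝ^n ⊗ ℝ^n ≅ ℝ^{n³}` induced by
`ℓ_p^n, ℓ_q^n, ℓ_r^n`. -/
noncomputable def projNorm3 (p q r : ℝ≥0∞) {n : ℕ} (A : Fin n → Fin n → Fin n → ℝ) : ℝ :=
  sInf {t : ℝ | ∃ (m : ℕ) (x y z : Fin m → Fin n → ℝ),
    (∀ i j k, A i j k = ∑ s, x s i * y s j * z s k) ∧
    t = ∑ s, pnorm p (x s) * pnorm q (y s) * pnorm r (z s)}

/-- The Euclidean (`ℓ_2^{n³}`) norm of an array. -/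
noncomputable def l2norm3 {n : ℕ} (A : Fin n → Fin n → Fin n → ℝ) : ℝ :=
  Real.sqrt (∑ i, ∑ j, ∑ k, (A i j k) ^ 2)

/-- The operator norm of the identity map `ℓ_2^{n³} → ℓ_p^n ⊗_π ℓ_q^n ⊗_π ℓ_r^n`. -/
noncomputable def idNorm3 (p q r : ℝ≥0∞) (n : ℕ) : ℝ :=
  sSup {t : ℝ | ∃ A : Fin n → Fin n → Fin n → ℝ, l2norm3 A ≤ 1 ∧ t = projNorm3 p q r A}

/-- The projective tensor norm on `ℝ^n ⊗ ℝ^n ≅ ℝ^{n²}` induced by `ℓ_p^n, ℓ_q^n`. -/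
noncomputable def projNorm2 (p q : ℝ≥0∞) {n : ℕ} (A : Fin n → Fin n → ℝ) : ℝ :=
  sInf {t : ℝ | ∃ (m : ℕ) (x y : Fin m → Fin n → ℝ),
    (∀ i j, A i j = ∑ s, x s i * y s j) ∧
    t = ∑ s, pnorm p (x s) * pnorm q (y s)}

/-- The Euclidean (`ℓ_2^{n²}`) norm of a matrix. -/
noncomputable def l2norm2 {n : ℕ} (A : Fin n → Fin n → ℝ) : ℝ :=
  Real.sqrt (∑ i, ∑ j, (A i j) ^ 2)

/-- The operator norm of the identity map `ℓ_2^{n²} → ℓ_p^n ⊗_π ℓ_q^n`. -/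
noncomputable def idNorm2 (p q : ℝ≥0∞) (n : ℕ) : ℝ :=
  sSup {t : ℝ | ∃ A : Fin n → Fin n → ℝ, l2norm2 A ≤ 1 ∧ t = projNorm2 p q A}

/-!
Let `H : Matrix S (Fin n) ℝ` satisfy `Hᵀ H = N • 1`. Then `A = ∑ s, B s ⊗ H s` with
`B s = N⁻¹ ∑ k, H s k • A(·,·,k)`, so the triangle inequality for the
projective norm gives `‖A‖_π ≤ idNorm2 p q n * ∑ s, ‖B s‖₂ ‖H s‖_r`, while
`∑ s, ‖B s‖₂² = N⁻¹ ‖A‖₂²` and Cauchy–Schwarz give `∑ s, ‖B s‖₂ ≤ √(#S / N) ‖A‖₂`.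
The identity matrix (`#S = n`, `N = 1`, rows of `ℓ_r`-norm `1`) yields the factor `√n`;
the matrix whose `2ⁿ` rows are all sign vectors (`#S = N = 2ⁿ`, rows of `ℓ_r`-norm at most
`n^{1/r}`) yields the factor `n^{1/r}`.
-/

lemma le_sInf_mul_of_forall_le {S : Set ℝ} (hS : S.Nonempty) {a b : ℝ} (ha : 0 ≤ a)
    (h : ∀ t ∈ S, b ≤ t * a) : b ≤ sInf S * a := by
  rw [mul_comm, ← smul_eq_mul, ← Real.sInf_smul_of_nonneg ha]
  refine le_csInf (hS.smul_set) ?_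
  rintro _ ⟨t, ht, rfl⟩
  exact (h t ht).trans_eq (mul_comm t a)

lemma sum_le_sqrt_card_mul_sum_sq {ι : Type*} [Fintype ι] (f : ι → ℝ) :
    ∑ s, f s ≤ √(Fintype.card ι * ∑ s, f s ^ 2) :=
  (le_abs_self _).trans <| Real.abs_le_sqrt <| by
    simpa using sq_sum_le_card_mul_sum_sq (s := univ) (f := f)

section

open scoped Matrix

variable {n : ℕ}

lemma pnorm_nonneg (p : ℝ≥0∞) (x : Fin n → ℝ) : 0 ≤ pnorm p x := by
  unfold pnorm
  split
  · exact Real.iSup_nonneg fun i => abs_nonneg _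
  · exact Real.rpow_nonneg (sum_nonneg fun i _ => Real.rpow_nonneg (abs_nonneg _) _) _

lemma pnorm_mul_left {p : ℝ≥0∞} (hp : p ≠ 0) (c : ℝ) (x : Fin n → ℝ) :
    pnorm p (fun i => c * x i) = |c| * pnorm p x := by
  unfold pnorm
  split
  · simp_rw [Real.mul_iSup_of_nonneg (abs_nonneg c), abs_mul]
  · next h =>
    have ht : p.toReal ≠ 0 := (ENNReal.toReal_pos hp h).ne'
    simp_rw [abs_mul, Real.mul_rpow (abs_nonneg _) (abs_nonneg _), ← mul_sum]
    rw [Real.mul_rpow (by positivity) (sum_nonneg fun i _ => by positivity),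
      ← Real.rpow_mul (abs_nonneg c), mul_one_div_cancel ht, Real.rpow_one]

lemma pnorm_single_s11 {p : ℝ≥0∞} (hp : p ≠ 0) (a : Fin n) (v : ℝ) :
    pnorm p (Pi.single a v) = |v| := by
  unfold pnorm
  split
  · refine le_antisymm (Real.iSup_le (fun i => ?_) (abs_nonneg v)) ?_
    · rcases eq_or_ne i a with rfl | hi <;> simp [*]
    · simpa using le_ciSup (Finite.bddAbove_range fun i => |(Pi.single a v : Fin n → ℝ) i|) a
  · next h =>
    have ht : 0 < p.toReal := ENNReal.toReal_pos hp h
    have hsingle : ∀ i, |(Pi.single a v : Fin n → ℝ) i| ^ p.toReal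
        = (Pi.single a (|v| ^ p.toReal) : Fin n → ℝ) i := by
      intro i
      rcases eq_or_ne i a with rfl | hi
      · simp
      · simp [hi, Real.zero_rpow ht.ne']
    simp_rw [hsingle, sum_pi_single', mem_univ, if_true]
    rw [← Real.rpow_mul (abs_nonneg v), mul_one_div_cancel ht.ne', Real.rpow_one]

lemma pnorm_le_rpow_of_abs_le_one (r : ℝ≥0∞) {x : Fin n → ℝ} (hx : ∀ k, |x k| ≤ 1) :
    pnorm r x ≤ (n : ℝ) ^ (1 / r).toReal := by
  unfold pnorm
  split
  · next h => simpa [h] using Real.iSup_le hx zero_le_one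
  · rw [one_div r, ENNReal.toReal_inv, ← one_div]
    refine Real.rpow_le_rpow (sum_nonneg fun i _ => by positivity) ?_ (by positivity)
    calc ∑ i, |x i| ^ r.toReal ≤ ∑ _i : Fin n, (1 : ℝ) :=
          sum_le_sum fun i _ => Real.rpow_le_one (abs_nonneg _) (hx i) ENNReal.toReal_nonneg
      _ = n := by simp

def projCosts2 (p q : ℝ≥0∞) (B : Fin n → Fin n → ℝ) : Set ℝ :=
  {t : ℝ | ∃ (m : ℕ) (x y : Fin m → Fin n → ℝ),
    (∀ i j, B i j = ∑ s, x s i * y s j) ∧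
    t = ∑ s, pnorm p (x s) * pnorm q (y s)}

def projCosts3 (p q r : ℝ≥0∞) (A : Fin n → Fin n → Fin n → ℝ) : Set ℝ :=
  {t : ℝ | ∃ (m : ℕ) (x y z : Fin m → Fin n → ℝ),
    (∀ i j k, A i j k = ∑ s, x s i * y s j * z s k) ∧
    t = ∑ s, pnorm p (x s) * pnorm q (y s) * pnorm r (z s)}

lemma projNorm3_eq_sInf (p q r : ℝ≥0∞) (A : Fin n → Fin n → Fin n → ℝ) :
    projNorm3 p q r A = sInf (projCosts3 p q r A) := rfl

lemma sum_mem_projCosts2 {p q : ℝ≥0∞} {B : Fin n → Fin n → ℝ} {ι : Type*} [Fintype ι]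
    (x y : ι → Fin n → ℝ) (h : ∀ i j, B i j = ∑ s, x s i * y s j) :
    ∑ s, pnorm p (x s) * pnorm q (y s) ∈ projCosts2 p q B := by
  let e := Fintype.equivFin ι
  refine ⟨_, x ∘ e.symm, y ∘ e.symm, fun i j => ?_, ?_⟩
  · rw [h, ← e.symm.sum_comp]; rfl
  · rw [← e.symm.sum_comp]; rfl

lemma sum_mem_projCosts3 {p q r : ℝ≥0∞} {A : Fin n → Fin n → Fin n → ℝ} {ι : Type*}
    [Fintype ι] (x y z : ι → Fin n → ℝ) (h : ∀ i j k, A i j k = ∑ s, x s i * y s j * z s k) :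
    ∑ s, pnorm p (x s) * pnorm q (y s) * pnorm r (z s) ∈ projCosts3 p q r A := by
  let e := Fintype.equivFin ι
  refine ⟨_, x ∘ e.symm, y ∘ e.symm, z ∘ e.symm, fun i j k => ?_, ?_⟩
  · rw [h, ← e.symm.sum_comp]; rfl
  · rw [← e.symm.sum_comp]; rfl

lemma nonneg_of_mem_projCosts2 {p q : ℝ≥0∞} {B : Fin n → Fin n → ℝ} {t : ℝ}
    (ht : t ∈ projCosts2 p q B) : 0 ≤ t := by
  obtain ⟨m, x, y, -, rfl⟩ := ht
  exact sum_nonneg fun s _ => mul_nonneg (pnorm_nonneg _ _) (pnorm_nonneg _ _)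

lemma nonneg_of_mem_projCosts3 {p q r : ℝ≥0∞} {A : Fin n → Fin n → Fin n → ℝ} {t : ℝ}
    (ht : t ∈ projCosts3 p q r A) : 0 ≤ t := by
  obtain ⟨m, x, y, z, -, rfl⟩ := ht
  exact sum_nonneg fun s _ =>
    mul_nonneg (mul_nonneg (pnorm_nonneg _ _) (pnorm_nonneg _ _)) (pnorm_nonneg _ _)

lemma eq_sum_single_mul_single (B : Fin n → Fin n → ℝ) (i j : Fin n) :
    B i j = ∑ ab : Fin n × Fin n,
      (Pi.single ab.1 (B ab.1 ab.2) : Fin n → ℝ) i * (Pi.single ab.2 1 : Fin n → ℝ) j := by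
  simp [Fintype.sum_prod_type, Pi.single_apply]

lemma projCosts2_nonempty (p q : ℝ≥0∞) (B : Fin n → Fin n → ℝ) :
    (projCosts2 p q B).Nonempty :=
  ⟨_, sum_mem_projCosts2 _ _ (eq_sum_single_mul_single B)⟩

lemma projCosts3_nonempty (p q r : ℝ≥0∞) (A : Fin n → Fin n → Fin n → ℝ) :
    (projCosts3 p q r A).Nonempty := by
  refine ⟨_, sum_mem_projCosts3 (ι := Fin n × Fin n) (fun ab i => A i ab.1 ab.2)
    (fun ab => Pi.single ab.1 1) (fun ab => Pi.single ab.2 1) fun i j k => ?_⟩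
  simp [Fintype.sum_prod_type, Pi.single_apply]

lemma projNorm2_le_sum {p q : ℝ≥0∞} {B : Fin n → Fin n → ℝ} {ι : Type*} [Fintype ι]
    (x y : ι → Fin n → ℝ) (h : ∀ i j, B i j = ∑ s, x s i * y s j) :
    projNorm2 p q B ≤ ∑ s, pnorm p (x s) * pnorm q (y s) :=
  csInf_le ⟨0, fun _ => nonneg_of_mem_projCosts2⟩ (sum_mem_projCosts2 x y h)

lemma projNorm3_le_sum {p q r : ℝ≥0∞} {A : Fin n → Fin n → Fin n → ℝ} {ι : Type*}
    [Fintype ι] (x y z : ι → Fin n → ℝ) (h : ∀ i j k, A i j k = ∑ s, x s i * y s j * z s k) :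
    projNorm3 p q r A ≤ ∑ s, pnorm p (x s) * pnorm q (y s) * pnorm r (z s) :=
  csInf_le ⟨0, fun _ => nonneg_of_mem_projCosts3⟩ (sum_mem_projCosts3 x y z h)

lemma projNorm2_nonneg (p q : ℝ≥0∞) (B : Fin n → Fin n → ℝ) : 0 ≤ projNorm2 p q B :=
  le_csInf (projCosts2_nonempty p q B) fun _ => nonneg_of_mem_projCosts2

lemma projNorm2_le_sum_abs {p q : ℝ≥0∞} (hp : p ≠ 0) (hq : q ≠ 0) (B : Fin n → Fin n → ℝ) :
    projNorm2 p q B ≤ ∑ i, ∑ j, |B i j| := by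
  refine (projNorm2_le_sum _ _ (eq_sum_single_mul_single B)).trans_eq ?_
  simp [pnorm_single_s11 hp, pnorm_single_s11 hq, Fintype.sum_prod_type]

lemma projNorm2_mul_left_le {p q : ℝ≥0∞} (hp : p ≠ 0) (c : ℝ) (B : Fin n → Fin n → ℝ) :
    projNorm2 p q (fun i j => c * B i j) ≤ |c| * projNorm2 p q B := by
  rw [mul_comm]
  refine le_sInf_mul_of_forall_le (projCosts2_nonempty p q B) (abs_nonneg c) ?_
  rintro _ ⟨m, x, y, h, rfl⟩
  refine (projNorm2_le_sum (fun s i => c * x s i) y fun i j => ?_).trans_eq ?_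
  · simp_rw [h, mul_sum, mul_assoc]
  · rw [sum_mul]
    refine sum_congr rfl fun s _ => ?_
    rw [pnorm_mul_left hp]
    ring

lemma projNorm3_tensor_le (p q r : ℝ≥0∞) (B : Fin n → Fin n → ℝ) (z : Fin n → ℝ) :
    projNorm3 p q r (fun i j k => B i j * z k) ≤ projNorm2 p q B * pnorm r z := by
  refine le_sInf_mul_of_forall_le (projCosts2_nonempty p q B) (pnorm_nonneg r z) ?_
  rintro _ ⟨m, x, y, h, rfl⟩
  refine (projNorm3_le_sum x y (fun _ => z) fun i j k => ?_).trans_eq ?_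
  · rw [h, sum_mul]
  · rw [sum_mul]

lemma projNorm3_add_le (p q r : ℝ≥0∞) (A B : Fin n → Fin n → Fin n → ℝ) :
    projNorm3 p q r (fun i j k => A i j k + B i j k)
      ≤ projNorm3 p q r A + projNorm3 p q r B := by
  refine le_of_forall_pos_le_add fun ε hε => ?_
  obtain ⟨_, ⟨m₁, x₁, y₁, z₁, h₁, rfl⟩, lt₁⟩ :=
    Real.lt_sInf_add_pos (projCosts3_nonempty p q r A) (half_pos hε)
  obtain ⟨_, ⟨m₂, x₂, y₂, z₂, h₂, rfl⟩, lt₂⟩ :=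
    Real.lt_sInf_add_pos (projCosts3_nonempty p q r B) (half_pos hε)
  have hle := projNorm3_le_sum (p := p) (q := q) (r := r)
    (A := fun i j k => A i j k + B i j k) (Sum.elim x₁ x₂) (Sum.elim y₁ y₂)
    (Sum.elim z₁ z₂) fun i j k => by simp [Fintype.sum_sum_type, h₁, h₂]
  rw [Fintype.sum_sum_type] at hle
  simp only [Sum.elim_inl, Sum.elim_inr] at hle
  rw [← projNorm3_eq_sInf] at lt₁ lt₂
  linarith

lemma projNorm3_sum_le (p q r : ℝ≥0∞) {ι : Type*} (t : Finset ι)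
    (F : ι → Fin n → Fin n → Fin n → ℝ) :
    projNorm3 p q r (fun i j k => ∑ s ∈ t, F s i j k) ≤ ∑ s ∈ t, projNorm3 p q r (F s) := by
  classical
  induction t using Finset.induction with
  | empty =>
    simpa using projNorm3_le_sum (p := p) (q := q) (r := r) (A := fun _ _ _ => 0)
      (ι := Fin 0) finZeroElim finZeroElim finZeroElim (by simp)
  | insert a t ha ih =>
    simp_rw [sum_insert ha]
    exact (projNorm3_add_le p q r _ _).trans (add_le_add_right ih _)

lemma l2norm2_nonneg (B : Fin n → Fin n → ℝ) : 0 ≤ l2norm2 B := Real.sqrt_nonneg _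

lemma l2norm3_nonneg (A : Fin n → Fin n → Fin n → ℝ) : 0 ≤ l2norm3 A := Real.sqrt_nonneg _

lemma l2norm2_sq (B : Fin n → Fin n → ℝ) : l2norm2 B ^ 2 = ∑ i, ∑ j, B i j ^ 2 :=
  Real.sq_sqrt (by positivity)

lemma l2norm3_sq (A : Fin n → Fin n → Fin n → ℝ) :
    l2norm3 A ^ 2 = ∑ i, ∑ j, ∑ k, A i j k ^ 2 :=
  Real.sq_sqrt (by positivity)

lemma l2norm2_mul_left (c : ℝ) (B : Fin n → Fin n → ℝ) :
    l2norm2 (fun i j => c * B i j) = |c| * l2norm2 B := by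
  simp_rw [l2norm2, mul_pow, ← mul_sum]
  rw [Real.sqrt_mul (sq_nonneg c), Real.sqrt_sq_eq_abs]

lemma abs_le_l2norm2 (B : Fin n → Fin n → ℝ) (i j : Fin n) : |B i j| ≤ l2norm2 B := by
  refine Real.abs_le_sqrt ?_
  calc B i j ^ 2 ≤ ∑ j', B i j' ^ 2 :=
        single_le_sum (f := fun j' => B i j' ^ 2) (fun _ _ => sq_nonneg _) (mem_univ j)
    _ ≤ ∑ i', ∑ j', B i' j' ^ 2 :=
        single_le_sum (f := fun i' => ∑ j', B i' j' ^ 2) (fun _ _ => by positivity) (mem_univ i)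

lemma projNorm2_le_card_sq_mul_l2norm2 {p q : ℝ≥0∞} (hp : p ≠ 0) (hq : q ≠ 0)
    (B : Fin n → Fin n → ℝ) : projNorm2 p q B ≤ n ^ 2 * l2norm2 B :=
  calc projNorm2 p q B ≤ ∑ i, ∑ j, |B i j| := projNorm2_le_sum_abs hp hq B
    _ ≤ ∑ _i : Fin n, ∑ _j : Fin n, l2norm2 B :=
        sum_le_sum fun i _ => sum_le_sum fun j _ => abs_le_l2norm2 B i j
    _ = n ^ 2 * l2norm2 B := by simp [sq, mul_assoc]

lemma idNorm2_bddAbove {p q : ℝ≥0∞} (hp : p ≠ 0) (hq : q ≠ 0) (n : ℕ) :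
    BddAbove {t : ℝ | ∃ A : Fin n → Fin n → ℝ, l2norm2 A ≤ 1 ∧ t = projNorm2 p q A} := by
  refine ⟨n ^ 2, ?_⟩
  rintro _ ⟨A, hA, rfl⟩
  calc projNorm2 p q A ≤ n ^ 2 * l2norm2 A := projNorm2_le_card_sq_mul_l2norm2 hp hq A
    _ ≤ n ^ 2 := mul_le_of_le_one_right (by positivity) hA

lemma le_idNorm2 {p q : ℝ≥0∞} (hp : p ≠ 0) (hq : q ≠ 0) {B : Fin n → Fin n → ℝ}
    (hB : l2norm2 B ≤ 1) : projNorm2 p q B ≤ idNorm2 p q n :=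
  le_csSup (idNorm2_bddAbove hp hq n) ⟨B, hB, rfl⟩

lemma idNorm2_nonneg {p q : ℝ≥0∞} (hp : p ≠ 0) (hq : q ≠ 0) (n : ℕ) : 0 ≤ idNorm2 p q n :=
  (projNorm2_nonneg p q _).trans <|
    le_idNorm2 hp hq (B := fun (_ _ : Fin n) => 0) (by simp [l2norm2])

lemma projNorm2_le_idNorm2_mul {p q : ℝ≥0∞} (hp : p ≠ 0) (hq : q ≠ 0)
    (B : Fin n → Fin n → ℝ) : projNorm2 p q B ≤ idNorm2 p q n * l2norm2 B := by
  rcases (l2norm2_nonneg B).eq_or_lt with h0 | hpos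
  · simpa [← h0] using projNorm2_le_card_sq_mul_l2norm2 hp hq B
  set c := l2norm2 B
  have hunit : l2norm2 (fun i j => c⁻¹ * B i j) ≤ 1 := by
    rw [l2norm2_mul_left, abs_inv, abs_of_pos hpos, inv_mul_cancel₀ hpos.ne']
  calc projNorm2 p q B = projNorm2 p q (fun i j => c * (c⁻¹ * B i j)) := by
        simp [mul_inv_cancel_left₀ hpos.ne']
    _ ≤ |c| * projNorm2 p q (fun i j => c⁻¹ * B i j) := projNorm2_mul_left_le hp c _
    _ ≤ c * idNorm2 p q n := by
        rw [abs_of_pos hpos]; exact mul_le_mul_of_nonneg_left (le_idNorm2 hp hq hunit) hpos.le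
    _ = idNorm2 p q n * c := mul_comm _ _

section TightFrame

variable {S : Type*} [Fintype S] {H : Matrix S (Fin n) ℝ} {N : ℝ}

lemma transpose_mulVec_mulVec (hH : Hᵀ * H = N • 1) (v : Fin n → ℝ) :
    Hᵀ *ᵥ (H *ᵥ v) = N • v := by
  rw [Matrix.mulVec_mulVec, hH, Matrix.smul_mulVec, Matrix.one_mulVec]

lemma sum_mulVec_sq (hH : Hᵀ * H = N • 1) (v : Fin n → ℝ) :
    ∑ s, (H *ᵥ v) s ^ 2 = N * ∑ k, v k ^ 2 := by
  have h := Matrix.dotProduct_mulVec (H *ᵥ v) H v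
  rw [← Matrix.mulVec_transpose, transpose_mulVec_mulVec hH, smul_dotProduct] at h
  simpa [dotProduct, sq] using h

theorem projNorm3_le_of_transpose_mul_self {p q r : ℝ≥0∞} (hp : p ≠ 0) (hq : q ≠ 0)
    (hN : 0 < N) (hH : Hᵀ * H = N • 1) {c : ℝ} (hc0 : 0 ≤ c) (hc : ∀ s, pnorm r (H s) ≤ c)
    (A : Fin n → Fin n → Fin n → ℝ) :
    projNorm3 p q r A ≤ c * √(Fintype.card S / N) * idNorm2 p q n * l2norm3 A := by
  set B : S → Fin n → Fin n → ℝ := fun s i j => N⁻¹ * (H *ᵥ fun k => A i j k) s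
  have hdecomp : A = fun i j k => ∑ s, B s i j * H s k := by
    ext i j k
    have h := congrFun (transpose_mulVec_mulVec hH fun k => A i j k) k
    simp only [Matrix.mulVec, dotProduct, Matrix.transpose_apply, Pi.smul_apply,
      smul_eq_mul] at h
    calc A i j k = N⁻¹ * (N * A i j k) := (inv_mul_cancel_left₀ hN.ne' _).symm
      _ = ∑ s, B s i j * H s k := by
        rw [← h, mul_sum]
        exact sum_congr rfl fun s _ => by simp only [B, Matrix.mulVec, dotProduct]; ring
  have hsq : ∑ s, l2norm2 (B s) ^ 2 = N⁻¹ * l2norm3 A ^ 2 := by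
    calc ∑ s, l2norm2 (B s) ^ 2
        = ∑ i, ∑ j, (N⁻¹) ^ 2 * ∑ s, (H *ᵥ fun k => A i j k) s ^ 2 := by
          simp_rw [l2norm2_sq, B, mul_pow, mul_sum]
          rw [sum_comm]
          exact sum_congr rfl fun i _ => sum_comm
      _ = N⁻¹ * l2norm3 A ^ 2 := by
          simp_rw [sum_mulVec_sq hH, l2norm3_sq, mul_sum, ← mul_assoc, sq,
            inv_mul_cancel_right₀ hN.ne']
  have hsum : ∑ s, l2norm2 (B s) ≤ √(Fintype.card S / N) * l2norm3 A := by
    refine (sum_le_sqrt_card_mul_sum_sq _).trans_eq ?_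
    rw [hsq, ← mul_assoc, ← div_eq_mul_inv, Real.sqrt_mul (by positivity),
      Real.sqrt_sq (l2norm3_nonneg A)]
  have hD := idNorm2_nonneg hp hq n
  calc projNorm3 p q r A = projNorm3 p q r (fun i j k => ∑ s, B s i j * H s k) := by
        rw [← hdecomp]
    _ ≤ ∑ s, projNorm3 p q r (fun i j k => B s i j * H s k) := projNorm3_sum_le p q r univ _
    _ ≤ ∑ s, projNorm2 p q (B s) * pnorm r (H s) :=
        sum_le_sum fun s _ => projNorm3_tensor_le p q r _ _
    _ ≤ ∑ s, idNorm2 p q n * l2norm2 (B s) * c :=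
        sum_le_sum fun s _ => mul_le_mul (projNorm2_le_idNorm2_mul hp hq _) (hc s)
          (pnorm_nonneg _ _) (mul_nonneg hD (l2norm2_nonneg _))
    _ = c * idNorm2 p q n * ∑ s, l2norm2 (B s) := by
        rw [mul_sum]; exact sum_congr rfl fun s _ => by ring
    _ ≤ c * idNorm2 p q n * (√(Fintype.card S / N) * l2norm3 A) :=
        mul_le_mul_of_nonneg_left hsum (mul_nonneg hc0 hD)
    _ = c * √(Fintype.card S / N) * idNorm2 p q n * l2norm3 A := by ring

end TightFrame

lemma projNorm3_le_sqrt_mul {p q : ℝ≥0∞} (hp : p ≠ 0) (hq : q ≠ 0) (r : ℝ≥0∞)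
    (hr : r ≠ 0) (A : Fin n → Fin n → Fin n → ℝ) :
    projNorm3 p q r A ≤ √n * idNorm2 p q n * l2norm3 A := by
  have h := projNorm3_le_of_transpose_mul_self (r := r)
    (H := (1 : Matrix (Fin n) (Fin n) ℝ)) hp hq
    one_pos (by simp) zero_le_one (fun s => ?_) A
  · simpa using h
  · rw [show (1 : Matrix (Fin n) (Fin n) ℝ) s = Pi.single s 1 from
      funext fun k => Matrix.one_eq_pi_single, pnorm_single_s11 hr, abs_one]

def signMatrix (n : ℕ) : Matrix (Fin n → Bool) (Fin n) ℝ :=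
  Matrix.of fun ε k => if ε k then 1 else -1

lemma signMatrix_transpose_mul_self (n : ℕ) :
    (signMatrix n)ᵀ * signMatrix n = (2 : ℝ) ^ n • 1 := by
  ext k k'
  simp only [Matrix.mul_apply, Matrix.transpose_apply, signMatrix, Matrix.of_apply,
    Matrix.smul_apply, Matrix.one_apply, smul_eq_mul]
  rcases eq_or_ne k k' with rfl | h
  · have hsq : ∀ ε : Fin n → Bool,
        (if ε k then (1 : ℝ) else -1) * (if ε k then (1 : ℝ) else -1) = 1 := by
      intro ε; cases ε k <;> norm_num
    simp [hsq]
  · rw [if_neg h, mul_zero]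
    refine sum_ninvolution (fun ε => Function.update ε k (!ε k)) (fun ε => ?_)
      (fun ε _ hε => ?_) (fun ε => mem_univ _) (fun ε => ?_)
    · simp only [Function.update_self, Function.update_of_ne (Ne.symm h)]
      cases ε k <;> cases ε k' <;> norm_num
    · simpa using congrFun hε k
    · ext l
      rcases eq_or_ne l k with rfl | hl <;> simp [Function.update_of_ne, *]

lemma projNorm3_le_rpow_mul {p q : ℝ≥0∞} (hp : p ≠ 0) (hq : q ≠ 0) (r : ℝ≥0∞)
    (A : Fin n → Fin n → Fin n → ℝ) :
    projNorm3 p q r A ≤ (n : ℝ) ^ (1 / r).toReal * idNorm2 p q n * l2norm3 A := by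
  have h := projNorm3_le_of_transpose_mul_self hp hq (by positivity)
    (signMatrix_transpose_mul_self n) (by positivity)
    (fun ε => pnorm_le_rpow_of_abs_le_one r fun k => ?_) A
  · simpa [Fintype.card_fun] using h
  · simp only [signMatrix, Matrix.of_apply]
    cases ε k <;> norm_num

end

theorem stmt11 (n : ℕ) (p q r : ℝ≥0∞) (hp : 1 ≤ p) (hq : 1 ≤ q) (hr : 1 ≤ r) :
    idNorm3 p q r n ≤ (n : ℝ) ^ (min (1 / r).toReal (1 / 2)) * idNorm2 p q n := by
  have hp0 : p ≠ 0 := (one_pos.trans_le hp).ne'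
  have hq0 : q ≠ 0 := (one_pos.trans_le hq).ne'
  have hbound : ∀ A : Fin n → Fin n → Fin n → ℝ,
      projNorm3 p q r A ≤ (n : ℝ) ^ (min (1 / r).toReal (1 / 2)) * idNorm2 p q n * l2norm3 A := by
    intro A
    rcases min_choice (1 / r).toReal (1 / 2) with h | h <;> rw [h]
    · exact projNorm3_le_rpow_mul hp0 hq0 r A
    · rw [← Real.sqrt_eq_rpow]
      exact projNorm3_le_sqrt_mul hp0 hq0 r (one_pos.trans_le hr).ne' A
  have hD := idNorm2_nonneg hp0 hq0 n
  refine Real.sSup_le ?_ (by positivity)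
  rintro _ ⟨A, hA, rfl⟩
  exact (hbound A).trans (mul_le_of_le_one_right (by positivity) hA)
end
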